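/- arXiv:2502.00480 — 10 statements merged into one kernel-verified Lean document; each statement's English description precedes it below -/
import Mathlib

section
/- Let G be a complex vector space and let A, B, Ã, B̃ : G → G be linear maps. Set Λ = {(f,f') ∈ G × G : A f = B f'} and Λ̃ = {(f,f') ∈ G × G : Ã f = B̃ f'}, and let F = range(A) + range(B) and F̃ = range(Ã) + range(B̃) (the subspaces of G spanned by the respective ranges). Then Λ = Λ̃ if and only if there exists a linear isomorphism X : F → F̃ such that Ã f = X(A f) and B̃ f = X(B f) for all f ∈ G (where A f and B f are regarded as elements of F). -/
/-- Two relations `Λ = {(f,f') | A f = B f'}` and `Λ̃ = {(f,f') | Ã f = B̃ f'}` coincide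
iff there is a linear isomorphism `X : range A ⊔ range B → range Ã ⊔ range B̃` with
`Ã = X A` and `B̃ = X B`. -/
theorem stmt2 (G : Type*) [AddCommGroup G] [Module ℂ G]
    (A B A' B' : G →ₗ[ℂ] G) :
    ({p : G × G | A p.1 = B p.2} = {p : G × G | A' p.1 = B' p.2}) ↔
      ∃ X : (LinearMap.range A ⊔ LinearMap.range B : Submodule ℂ G) ≃ₗ[ℂ]
            (LinearMap.range A' ⊔ LinearMap.range B' : Submodule ℂ G),
        ∀ f : G,
          (X ⟨A f, Submodule.mem_sup_left (LinearMap.mem_range_self A f)⟩ : G) = A' f ∧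
          (X ⟨B f, Submodule.mem_sup_right (LinearMap.mem_range_self B f)⟩ : G) = B' f := by
  set Φ : G × G →ₗ[ℂ] G := A.coprod (-B) with hΦ
  set Φ' : G × G →ₗ[ℂ] G := A'.coprod (-B') with hΦ'
  have hΦap : ∀ p : G × G, Φ p = A p.1 - B p.2 := by
    intro p; simp [hΦ, sub_eq_add_neg]
  have hΦ'ap : ∀ p : G × G, Φ' p = A' p.1 - B' p.2 := by
    intro p; simp [hΦ', sub_eq_add_neg]
  have hrange : LinearMap.range Φ = LinearMap.range A ⊔ LinearMap.range B := by
    simp [hΦ, LinearMap.range_coprod]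
  have hrange' : LinearMap.range Φ' = LinearMap.range A' ⊔ LinearMap.range B' := by
    simp [hΦ', LinearMap.range_coprod]
  constructor
  · intro h
    have hker : LinearMap.ker Φ = LinearMap.ker Φ' := by
      ext p
      have hp := Set.ext_iff.mp h p
      simp only [Set.mem_setOf_eq] at hp
      simp only [LinearMap.mem_ker, hΦap, hΦ'ap, sub_eq_zero]
      exact hp
    let X : (LinearMap.range A ⊔ LinearMap.range B : Submodule ℂ G) ≃ₗ[ℂ]
        (LinearMap.range A' ⊔ LinearMap.range B' : Submodule ℂ G) :=
      (LinearEquiv.ofEq _ _ hrange).symm.trans <|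
        (LinearMap.quotKerEquivRange Φ).symm.trans <|
          (Submodule.quotEquivOfEq _ _ hker).trans <|
            (LinearMap.quotKerEquivRange Φ').trans (LinearEquiv.ofEq _ _ hrange')
    have key : ∀ (v : G × G) (hv : Φ v ∈ (LinearMap.range A ⊔ LinearMap.range B :
        Submodule ℂ G)), (X ⟨Φ v, hv⟩ : G) = Φ' v := by
      intro v hv
      show ((LinearEquiv.ofEq _ _ hrange')
          ((LinearMap.quotKerEquivRange Φ')
            ((Submodule.quotEquivOfEq _ _ hker)
              ((LinearMap.quotKerEquivRange Φ).symm
                ((LinearEquiv.ofEq _ _ hrange).symm ⟨Φ v, hv⟩)))) : G) = Φ' v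
      have h1 : (LinearEquiv.ofEq _ _ hrange).symm ⟨Φ v, hv⟩
          = ⟨Φ v, LinearMap.mem_range_self Φ v⟩ := rfl
      rw [h1, LinearMap.quotKerEquivRange_symm_apply_image, Submodule.mkQ_apply,
        Submodule.quotEquivOfEq_mk, LinearEquiv.coe_ofEq_apply,
        LinearMap.quotKerEquivRange_apply_mk]
    refine ⟨X, fun f => ⟨?_, ?_⟩⟩
    · have := key (f, 0) (by rw [hΦap]; simpa using Submodule.mem_sup_left (LinearMap.mem_range_self A _))
      simpa [hΦap, hΦ'ap] using this
    · have := key (0, -f) (by rw [hΦap]; simpa using Submodule.mem_sup_right (LinearMap.mem_range_self B _))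
      simpa [hΦap, hΦ'ap] using this
  · rintro ⟨X, hX⟩
    ext p
    simp only [Set.mem_setOf_eq]
    constructor
    · intro hp
      have : (⟨A p.1, Submodule.mem_sup_left (LinearMap.mem_range_self A p.1)⟩ :
          (LinearMap.range A ⊔ LinearMap.range B : Submodule ℂ G))
          = ⟨B p.2, Submodule.mem_sup_right (LinearMap.mem_range_self B p.2)⟩ :=
        Subtype.ext hp
      have := congrArg (fun x => (X x : G)) this
      simpa [(hX p.1).1, (hX p.2).2] using this
    · intro hp
      have h1 := (hX p.1).1
      have h2 := (hX p.2).2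
      have : (X ⟨A p.1, Submodule.mem_sup_left (LinearMap.mem_range_self A p.1)⟩ :
          (LinearMap.range A' ⊔ LinearMap.range B' : Submodule ℂ G))
          = X ⟨B p.2, Submodule.mem_sup_right (LinearMap.mem_range_self B p.2)⟩ :=
        Subtype.ext (by rw [h1, h2, hp])
      have := X.injective this
      exact congrArg Subtype.val this
end

section
/- Let N be a natural number, let G = ℂ^N with the standard Hermitian inner product ⟨·,·⟩ (antilinear in the first argument), and let A, B : G → G be linear maps. Set Λ = {(f,f') ∈ G × G : A f = B f'} and define the adjoint relation Λ* = {(g,g') ∈ G × G : ⟨f', g⟩ = ⟨f, g'⟩ for all (f,f') ∈ Λ}. Then Λ = Λ* if and only if A∘B* = B∘A* (where * denotes the Hilbert-space adjoint) and the linear map G × G → G given by (x,y) ↦ A x + B y is surjective. -/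
/-!
Write `T (x, y) = A x - B y` and `S z = (B* z, A* z)`, so that `Λ = ker T`. In the `L²` product
`WithLp 2 (E × E)`, `q ∈ Λ*` says exactly that `(q.2, -q.1)` is orthogonal to `ker T`, and since
`(ker T)ᗮ = range T*` with `T* z = (A* z, -B* z)`, this gives `Λ* = range S`. Moreover
`ker S = ker A* ⊓ ker B* = (range T)ᗮ`, so `S` and `T` have the same rank. Hence `Λ = Λ*` iff
`range S ≤ ker T`, which is `A B* = B A*`, and `dim ker T ≤ rank T`, which by rank–nullity on
`E × E` is `rank T = dim E`, i.e. surjectivity.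
-/

open LinearMap Module Submodule

lemma Submodule.eq_iff_le_and_finrank_le {K V : Type*} [DivisionRing K] [AddCommGroup V]
    [Module K V] [FiniteDimensional K V] {S₁ S₂ : Submodule K V} :
    S₁ = S₂ ↔ S₁ ≤ S₂ ∧ finrank K S₂ ≤ finrank K S₁ :=
  ⟨fun h => ⟨h.le, h ▸ le_rfl⟩, fun ⟨hle, hfinrank⟩ => eq_of_le_of_finrank_le hle hfinrank⟩

lemma LinearMap.range_eq_top_iff_finrank_ker_le {K V : Type*} [DivisionRing K] [AddCommGroup V]
    [Module K V] [FiniteDimensional K V] (T : V × V →ₗ[K] V) :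
    range T = ⊤ ↔ finrank K (ker T) ≤ finrank K (range T) := by
  have := finrank_range_add_finrank_ker T
  have := (range T).finrank_le
  rw [finrank_prod] at *
  rw [eq_top_iff_finrank_eq]
  omega

lemma LinearMap.coe_ker_coprod_neg {R M : Type*} [Ring R] [AddCommGroup M] [Module R M]
    (A B : M →ₗ[R] M) : (ker (A.coprod (-B)) : Set (M × M)) = {p | A p.1 = B p.2} := by
  ext p
  simp [← sub_eq_add_neg, sub_eq_zero]

section InnerProductSpace

variable {𝕜 E F G : Type*} [RCLike 𝕜]
  [NormedAddCommGroup E] [InnerProductSpace 𝕜 E] [FiniteDimensional 𝕜 E]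
  [NormedAddCommGroup F] [InnerProductSpace 𝕜 F] [FiniteDimensional 𝕜 F]
  [NormedAddCommGroup G] [InnerProductSpace 𝕜 G] [FiniteDimensional 𝕜 G]

variable (𝕜) in
def adjointRelation (Λ : Set (E × E)) : Set (E × E) :=
  {q | ∀ p ∈ Λ, inner 𝕜 p.2 q.1 = inner 𝕜 p.1 q.2}

lemma LinearMap.adjoint_coprod_comp_withLp (A : F →ₗ[𝕜] E) (B : G →ₗ[𝕜] E) :
    adjoint (A.coprod B ∘ₗ (WithLp.linearEquiv 2 𝕜 (F × G)).toLinearMap) =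
      (WithLp.linearEquiv 2 𝕜 (F × G)).symm.toLinearMap ∘ₗ (adjoint A).prod (adjoint B) := by
  refine ((eq_adjoint_iff _ _).mpr fun z u => ?_).symm
  simp [WithLp.prod_inner_apply, inner_add_right, adjoint_inner_left]

lemma LinearMap.finrank_range_prod_adjoint (A : F →ₗ[𝕜] E) (B : G →ₗ[𝕜] E) :
    finrank 𝕜 (range ((adjoint A).prod (adjoint B))) = finrank 𝕜 ↥(range A ⊔ range B) := by
  have hker : ker ((adjoint A).prod (adjoint B)) = (range A ⊔ range B)ᗮ := by
    rw [ker_prod, ← orthogonal_range, ← orthogonal_range, inf_orthogonal]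
  have := finrank_range_add_finrank_ker ((adjoint A).prod (adjoint B))
  have := (range A ⊔ range B).finrank_add_finrank_orthogonal
  rw [hker] at *
  omega

lemma adjointRelation_ker_coprod_neg (A B : E →ₗ[𝕜] E) :
    adjointRelation 𝕜 (ker (A.coprod (-B)) : Set (E × E)) =
      range ((adjoint B).prod (adjoint A)) := by
  set e := WithLp.linearEquiv 2 𝕜 (E × E)
  set R := A.coprod (-B) ∘ₗ e.toLinearMap
  ext q
  have hmem : q ∈ adjointRelation 𝕜 (ker (A.coprod (-B)) : Set (E × E)) ↔
      e.symm (q.2, -q.1) ∈ (ker R)ᗮ := by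
    simp only [adjointRelation, mem_orthogonal, mem_ker, e.symm.surjective.forall]
    simp [R, e, WithLp.prod_inner_apply, inner_neg_right, ← sub_eq_add_neg, sub_eq_zero, eq_comm]
  rw [hmem, orthogonal_ker, adjoint_coprod_comp_withLp]
  simp [Prod.ext_iff, e, eq_comm, and_comm]

lemma range_prod_adjoint_le_ker_coprod_neg_iff (A B : E →ₗ[𝕜] E) :
    range ((adjoint B).prod (adjoint A)) ≤ ker (A.coprod (-B)) ↔
      A ∘ₗ adjoint B = B ∘ₗ adjoint A := by
  rw [range_le_ker_iff, coprod_comp_prod, neg_comp, ← sub_eq_add_neg, sub_eq_zero]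

end InnerProductSpace

/-- The relation `Λ = {(f,f') | A f = B f'}` in `ℂ^N` is self-adjoint, i.e. equal to its
adjoint relation, iff `A B* = B A*` and `(x,y) ↦ A x + B y` is surjective. -/
theorem stmt3 (N : ℕ)
    (A B : EuclideanSpace ℂ (Fin N) →ₗ[ℂ] EuclideanSpace ℂ (Fin N)) :
    ({p : EuclideanSpace ℂ (Fin N) × EuclideanSpace ℂ (Fin N) | A p.1 = B p.2} =
      {q : EuclideanSpace ℂ (Fin N) × EuclideanSpace ℂ (Fin N) |
        ∀ p : EuclideanSpace ℂ (Fin N) × EuclideanSpace ℂ (Fin N),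
          A p.1 = B p.2 → (inner ℂ p.2 q.1 : ℂ) = inner ℂ p.1 q.2}) ↔
      (A ∘ₗ LinearMap.adjoint B = B ∘ₗ LinearMap.adjoint A ∧
        Function.Surjective (fun xy : EuclideanSpace ℂ (Fin N) × EuclideanSpace ℂ (Fin N) =>
          A xy.1 + B xy.2)) := by
  change _ = adjointRelation ℂ {p | A p.1 = B p.2} ↔ _ ∧ Function.Surjective (A.coprod B)
  have hrank : finrank ℂ (range ((adjoint B).prod (adjoint A))) =
      finrank ℂ (range (A.coprod (-B))) := by
    rw [finrank_range_prod_adjoint, range_coprod, range_neg, sup_comm]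
  have hrange : range (A.coprod B) = range (A.coprod (-B)) := by
    rw [range_coprod, range_coprod, range_neg]
  rw [← coe_ker_coprod_neg, adjointRelation_ker_coprod_neg, SetLike.coe_set_eq, eq_comm,
    eq_iff_le_and_finrank_le, range_prod_adjoint_le_ker_coprod_neg_iff, ← range_eq_top, hrange,
    range_eq_top_iff_finrank_ker_le, hrank]
end

section
/- Let m ∈ ℝ, let a < b be real numbers, let z ∈ ℂ, let k ∈ ℂ with k ≠ 0 and k² = z² − m², set α = (z+m)/k, and assume sin(k(b−a)) ≠ 0. Define η₁(x) = (sin(k(b−x)), (i/α)·cos(k(b−x))) / sin(k(b−a)) and η₂(x) = (sin(k(x−a)), −(i/α)·cos(k(x−a))) / sin(k(b−a)). Then η₁ and η₂ each satisfy −i σ₁ u' + m σ₃ u = z u on (a,b), they are linearly independent, and every differentiable u : (a,b) → ℂ² satisfying −i σ₁ u' + m σ₃ u = z u on (a,b) equals ω₁ η₁ + ω₂ η₂ on (a,b) for unique ω₁, ω₂ ∈ ℂ. -/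
open Set

/-- `u₁, u₂` are the components of a differentiable solution of the Dirac equation
`-i σ₁ u' + m σ₃ u = z u` on `(a,b)`. -/
def IsDiracSol (m : ℝ) (z : ℂ) (a b : ℝ) (u₁ u₂ : ℝ → ℂ) : Prop :=
  ∀ x ∈ Set.Ioo a b, DifferentiableAt ℝ u₁ x ∧ DifferentiableAt ℝ u₂ x ∧
    (-Complex.I) * deriv u₂ x + (m : ℂ) * u₁ x = z * u₁ x ∧
    (-Complex.I) * deriv u₁ x - (m : ℂ) * u₂ x = z * u₂ x

/-- First component of `η₁(x) = (sin(k(b-x)), (i/α) cos(k(b-x))) / sin(k(b-a))`. -/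
noncomputable def eta11 (k s : ℂ) (b : ℝ) (x : ℝ) : ℂ :=
  Complex.sin (k * ((b : ℂ) - (x : ℂ))) / s

/-- Second component of `η₁`. -/
noncomputable def eta12 (k α s : ℂ) (b : ℝ) (x : ℝ) : ℂ :=
  (Complex.I / α) * Complex.cos (k * ((b : ℂ) - (x : ℂ))) / s

/-- First component of `η₂(x) = (sin(k(x-a)), -(i/α) cos(k(x-a))) / sin(k(b-a))`. -/
noncomputable def eta21 (k s : ℂ) (a : ℝ) (x : ℝ) : ℂ :=
  Complex.sin (k * ((x : ℂ) - (a : ℂ))) / s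

/-- Second component of `η₂`. -/
noncomputable def eta22 (k α s : ℂ) (a : ℝ) (x : ℝ) : ℂ :=
  -((Complex.I / α) * Complex.cos (k * ((x : ℂ) - (a : ℂ)))) / s

lemma hd_aff1 (k : ℂ) (b : ℝ) (x : ℝ) :
    HasDerivAt (fun y : ℝ => k * ((b:ℂ) - (y:ℂ))) (-k) x := by
  have h : HasDerivAt (fun y : ℝ => (y:ℂ)) 1 x := by
    exact Complex.ofRealCLM.hasDerivAt (x := x)
  simpa using (h.const_sub (b:ℂ)).const_mul k

lemma hd_aff2 (k : ℂ) (a : ℝ) (x : ℝ) :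
    HasDerivAt (fun y : ℝ => k * ((y:ℂ) - (a:ℂ))) k x := by
  have h : HasDerivAt (fun y : ℝ => (y:ℂ)) 1 x := by
    exact Complex.ofRealCLM.hasDerivAt (x := x)
  simpa using (h.sub_const (a:ℂ)).const_mul k

lemma hd_eta11 (k s : ℂ) (b : ℝ) (x : ℝ) :
    HasDerivAt (eta11 k s b) (-(k * Complex.cos (k * ((b:ℂ) - (x:ℂ))) / s)) x := by
  have h2 : HasDerivAt (fun y : ℝ => Complex.sin (k * ((b:ℂ) - (y:ℂ))))
      (Complex.cos (k * ((b:ℂ) - (x:ℂ))) * -k) x :=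
    (Complex.hasDerivAt_sin _).comp x (hd_aff1 k b x)
  convert h2.div_const s using 1
  · rfl
  · rfl
  · ring

lemma hd_eta12 (k α s : ℂ) (b : ℝ) (x : ℝ) :
    HasDerivAt (eta12 k α s b) ((Complex.I / α) * (k * Complex.sin (k * ((b:ℂ) - (x:ℂ)))) / s) x := by
  have h2 : HasDerivAt (fun y : ℝ => Complex.cos (k * ((b:ℂ) - (y:ℂ))))
      (-Complex.sin (k * ((b:ℂ) - (x:ℂ))) * -k) x :=
    (Complex.hasDerivAt_cos _).comp x (hd_aff1 k b x)
  convert (h2.const_mul (Complex.I / α)).div_const s using 1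
  · rfl
  · rfl
  · ring

lemma hd_eta21 (k s : ℂ) (a : ℝ) (x : ℝ) :
    HasDerivAt (eta21 k s a) (k * Complex.cos (k * ((x:ℂ) - (a:ℂ))) / s) x := by
  have h2 : HasDerivAt (fun y : ℝ => Complex.sin (k * ((y:ℂ) - (a:ℂ))))
      (Complex.cos (k * ((x:ℂ) - (a:ℂ))) * k) x :=
    (Complex.hasDerivAt_sin _).comp x (hd_aff2 k a x)
  convert h2.div_const s using 1
  · rfl
  · rfl
  · ring

lemma hd_eta22 (k α s : ℂ) (a : ℝ) (x : ℝ) :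
    HasDerivAt (eta22 k α s a) ((Complex.I / α) * (k * Complex.sin (k * ((x:ℂ) - (a:ℂ)))) / s) x := by
  have h2 : HasDerivAt (fun y : ℝ => Complex.cos (k * ((y:ℂ) - (a:ℂ))))
      (-Complex.sin (k * ((x:ℂ) - (a:ℂ))) * k) x :=
    (Complex.hasDerivAt_cos _).comp x (hd_aff2 k a x)
  convert ((h2.const_mul (Complex.I / α)).neg).div_const s using 1
  · rfl
  · rfl
  · ring

lemma const_of_deriv_zero {g : ℝ → ℂ} {a b : ℝ}
    (h : ∀ x ∈ Set.Ioo a b, HasDerivAt g 0 x) :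
    ∀ x ∈ Set.Ioo a b, ∀ y ∈ Set.Ioo a b, g x = g y := by
  intro x hx y hy
  refine (convex_Ioo a b).is_const_of_fderivWithin_eq_zero
    (fun t ht => ((h t ht).differentiableAt).differentiableWithinAt) (fun t ht => ?_) hx hy
  rw [fderivWithin_of_isOpen isOpen_Ioo ht, (h t ht).hasFDerivAt.fderiv]
  ext v; simp

/-- `η₁, η₂` solve the Dirac equation on `(a,b)`, are linearly independent there, and
every differentiable solution is a unique linear combination of them. -/
theorem stmt7 (m a b : ℝ) (hab : a < b) (z k : ℂ) (hk : k ≠ 0)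
    (hk2 : k ^ 2 = z ^ 2 - (m : ℂ) ^ 2) (α s : ℂ) (hα : α = (z + (m : ℂ)) / k)
    (hs : s = Complex.sin (k * ((b : ℂ) - (a : ℂ)))) (hs0 : s ≠ 0) :
    IsDiracSol m z a b (eta11 k s b) (eta12 k α s b) ∧
    IsDiracSol m z a b (eta21 k s a) (eta22 k α s a) ∧
    (∀ c₁ c₂ : ℂ,
      (∀ x ∈ Ioo a b,
        c₁ * eta11 k s b x + c₂ * eta21 k s a x = 0 ∧
        c₁ * eta12 k α s b x + c₂ * eta22 k α s a x = 0) → c₁ = 0 ∧ c₂ = 0) ∧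
    (∀ u₁ u₂ : ℝ → ℂ, IsDiracSol m z a b u₁ u₂ →
      ∃! ω : ℂ × ℂ, ∀ x ∈ Ioo a b,
        u₁ x = ω.1 * eta11 k s b x + ω.2 * eta21 k s a x ∧
        u₂ x = ω.1 * eta12 k α s b x + ω.2 * eta22 k α s a x) := by
  have hzm : z + (m:ℂ) ≠ 0 := by
    intro h
    have hz : z = -(m:ℂ) := by linear_combination h
    have : k ^ 2 = 0 := by rw [hk2, hz]; ring
    exact pow_ne_zero 2 hk this
  have hα0 : α ≠ 0 := by rw [hα]; exact div_ne_zero hzm hk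
  have hβ1 : (z + (m:ℂ)) * α⁻¹ = k := by
    rw [hα]; field_simp
  have hβ2 : k * α⁻¹ = z - (m:ℂ) := by
    rw [hα]; field_simp; linear_combination hk2
  have hI : Complex.I * Complex.I = -1 := Complex.I_mul_I
  -- determinant identity
  have hdet : ∀ x : ℝ, eta11 k s b x * eta22 k α s a x - eta21 k s a x * eta12 k α s b x
      = -(Complex.I / α) / s := by
    intro x
    have key : Complex.sin (k * ((b:ℂ) - (x:ℂ))) * Complex.cos (k * ((x:ℂ) - (a:ℂ)))
        + Complex.cos (k * ((b:ℂ) - (x:ℂ))) * Complex.sin (k * ((x:ℂ) - (a:ℂ))) = s := by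
      rw [hs, show k * ((b:ℂ) - (a:ℂ)) = k * ((b:ℂ) - (x:ℂ)) + k * ((x:ℂ) - (a:ℂ)) by ring,
        Complex.sin_add]
    simp only [eta11, eta12, eta21, eta22]
    field_simp
    linear_combination (-1 : ℂ) * key
  -- η₁ solves
  have sol1 : IsDiracSol m z a b (eta11 k s b) (eta12 k α s b) := by
    intro x hx
    refine ⟨(hd_eta11 k s b x).differentiableAt, (hd_eta12 k α s b x).differentiableAt, ?_, ?_⟩
    · rw [(hd_eta12 k α s b x).deriv]
      simp only [eta11]
      linear_combination (Complex.sin (k * ((b:ℂ) - (x:ℂ))) / s) * hβ2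
        - (k * α⁻¹ * Complex.sin (k * ((b:ℂ) - (x:ℂ))) / s) * hI
    · rw [(hd_eta11 k s b x).deriv]
      simp only [eta12]
      linear_combination (-(Complex.I * Complex.cos (k * ((b:ℂ) - (x:ℂ))) / s)) * hβ1
  -- η₂ solves
  have sol2 : IsDiracSol m z a b (eta21 k s a) (eta22 k α s a) := by
    intro x hx
    refine ⟨(hd_eta21 k s a x).differentiableAt, (hd_eta22 k α s a x).differentiableAt, ?_, ?_⟩
    · rw [(hd_eta22 k α s a x).deriv]
      simp only [eta21]
      linear_combination (Complex.sin (k * ((x:ℂ) - (a:ℂ))) / s) * hβ2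
        - (k * α⁻¹ * Complex.sin (k * ((x:ℂ) - (a:ℂ))) / s) * hI
    · rw [(hd_eta21 k s a x).deriv]
      simp only [eta22]
      linear_combination (Complex.I * Complex.cos (k * ((x:ℂ) - (a:ℂ))) / s) * hβ1
  refine ⟨sol1, sol2, ?_, ?_⟩
  · -- linear independence
    intro c₁ c₂ H
    set x₀ : ℝ := (a + b) / 2 with hx0def
    have hx₀ : x₀ ∈ Ioo a b := ⟨by simp only [hx0def]; linarith, by simp only [hx0def]; linarith⟩
    obtain ⟨h1, h2⟩ := H x₀ hx₀
    have hδ0 : -(Complex.I / α) / s ≠ 0 := by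
      apply div_ne_zero _ hs0
      simp [Complex.I_ne_zero, hα0]
    have hc1 : c₁ * (-(Complex.I / α) / s) = 0 := by
      rw [← hdet x₀]; linear_combination (eta22 k α s a x₀) * h1 - (eta21 k s a x₀) * h2
    have hc2 : c₂ * (-(Complex.I / α) / s) = 0 := by
      rw [← hdet x₀]; linear_combination (eta11 k s b x₀) * h2 - (eta12 k α s b x₀) * h1
    exact ⟨(mul_eq_zero.1 hc1).resolve_right hδ0, (mul_eq_zero.1 hc2).resolve_right hδ0⟩
  · -- representation
    intro u₁ u₂ hu
    set x₀ : ℝ := (a + b) / 2 with hx0def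
    have hx₀ : x₀ ∈ Ioo a b := ⟨by simp only [hx0def]; linarith, by simp only [hx0def]; linarith⟩
    set δ : ℂ := -(Complex.I / α) / s with hδ
    have hδ0 : δ ≠ 0 := by
      apply div_ne_zero _ hs0
      simp [Complex.I_ne_zero, hα0]
    -- deriv facts for u
    have hderiv : ∀ x ∈ Ioo a b,
        deriv u₁ x = Complex.I * (z + (m:ℂ)) * u₂ x ∧
        deriv u₂ x = Complex.I * (z - (m:ℂ)) * u₁ x := by
      intro x hx
      obtain ⟨_, _, e1, e2⟩ := hu x hx
      constructor
      · linear_combination Complex.I * e2 + (deriv u₁ x) * hI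
      · linear_combination Complex.I * e1 + (deriv u₂ x) * hI
    -- Wronskians constant
    have W1const : ∀ x ∈ Ioo a b, ∀ y ∈ Ioo a b,
        u₁ x * eta22 k α s a x - u₂ x * eta21 k s a x
          = u₁ y * eta22 k α s a y - u₂ y * eta21 k s a y := by
      apply const_of_deriv_zero
      intro x hx
      obtain ⟨hu1, hu2, _, _⟩ := hu x hx
      obtain ⟨hd1, hd2⟩ := hderiv x hx
      have h := (hu1.hasDerivAt.mul (hd_eta22 k α s a x)).sub
        (hu2.hasDerivAt.mul (hd_eta21 k s a x))
      convert h using 1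
      · rfl
      · rfl
      rw [hd1, hd2]
      simp only [eta21, eta22]
      linear_combination (-(u₂ x * Complex.cos (k * ((x:ℂ) - (a:ℂ))) * s⁻¹)) * hβ1
        - (Complex.I * u₁ x * Complex.sin (k * ((x:ℂ) - (a:ℂ))) * s⁻¹) * hβ2
        + ((z + (m:ℂ)) * u₂ x * Complex.cos (k * ((x:ℂ) - (a:ℂ))) * α⁻¹ * s⁻¹) * hI
    have W2const : ∀ x ∈ Ioo a b, ∀ y ∈ Ioo a b,
        eta11 k s b x * u₂ x - eta12 k α s b x * u₁ x
          = eta11 k s b y * u₂ y - eta12 k α s b y * u₁ y := by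
      apply const_of_deriv_zero
      intro x hx
      obtain ⟨hu1, hu2, _, _⟩ := hu x hx
      obtain ⟨hd1, hd2⟩ := hderiv x hx
      have h := ((hd_eta11 k s b x).mul hu2.hasDerivAt).sub
        ((hd_eta12 k α s b x).mul hu1.hasDerivAt)
      convert h using 1
      · rfl
      · rfl
      rw [hd1, hd2]
      simp only [eta11, eta12]
      linear_combination (-(u₂ x * Complex.cos (k * ((b:ℂ) - (x:ℂ))) * s⁻¹)) * hβ1
        + (Complex.I * u₁ x * Complex.sin (k * ((b:ℂ) - (x:ℂ))) * s⁻¹) * hβ2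
        + ((z + (m:ℂ)) * u₂ x * Complex.cos (k * ((b:ℂ) - (x:ℂ))) * α⁻¹ * s⁻¹) * hI
    set W1 : ℂ := u₁ x₀ * eta22 k α s a x₀ - u₂ x₀ * eta21 k s a x₀ with hW1
    set W2 : ℂ := eta11 k s b x₀ * u₂ x₀ - eta12 k α s b x₀ * u₁ x₀ with hW2
    refine ⟨(W1 / δ, W2 / δ), ?_, ?_⟩
    · intro x hx
      have e1 : u₁ x * δ = W1 * eta11 k s b x + W2 * eta21 k s a x := by
        rw [hW1, hW2, W1const x₀ hx₀ x hx, W2const x₀ hx₀ x hx, ← hdet x]; ring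
      have e2 : u₂ x * δ = W1 * eta12 k α s b x + W2 * eta22 k α s a x := by
        rw [hW1, hW2, W1const x₀ hx₀ x hx, W2const x₀ hx₀ x hx, ← hdet x]; ring
      constructor
      · field_simp
        linear_combination e1
      · field_simp
        linear_combination e2
    · intro ω' h'
      have hrepx : ∀ x ∈ Ioo a b,
          (ω'.1 - W1 / δ) * eta11 k s b x + (ω'.2 - W2 / δ) * eta21 k s a x = 0 ∧
          (ω'.1 - W1 / δ) * eta12 k α s b x + (ω'.2 - W2 / δ) * eta22 k α s a x = 0 := by
        intro x hx
        obtain ⟨f1, f2⟩ := h' x hx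
        have e1 : u₁ x * δ = W1 * eta11 k s b x + W2 * eta21 k s a x := by
          rw [hW1, hW2, W1const x₀ hx₀ x hx, W2const x₀ hx₀ x hx, ← hdet x]; ring
        have e2 : u₂ x * δ = W1 * eta12 k α s b x + W2 * eta22 k α s a x := by
          rw [hW1, hW2, W1const x₀ hx₀ x hx, W2const x₀ hx₀ x hx, ← hdet x]; ring
        have g1 : u₁ x = W1 / δ * eta11 k s b x + W2 / δ * eta21 k s a x := by
          field_simp; linear_combination e1
        have g2 : u₂ x = W1 / δ * eta12 k α s b x + W2 / δ * eta22 k α s a x := by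
          field_simp; linear_combination e2
        constructor
        · linear_combination g1 - f1
        · linear_combination g2 - f2
      -- use independence
      obtain ⟨q1, q2⟩ := hrepx x₀ hx₀
      have key := hdet x₀
      have hc1 : (ω'.1 - W1 / δ) * δ = 0 := by
        linear_combination (eta22 k α s a x₀) * q1 - (eta21 k s a x₀) * q2
          - (ω'.1 - W1 / δ) * key
      have hc2 : (ω'.2 - W2 / δ) * δ = 0 := by
        linear_combination (eta11 k s b x₀) * q2 - (eta12 k α s b x₀) * q1
          - (ω'.2 - W2 / δ) * key
      have z1 := (mul_eq_zero.1 hc1).resolve_right hδ0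
      have z2 := (mul_eq_zero.1 hc2).resolve_right hδ0
      exact Prod.ext (sub_eq_zero.1 z1) (sub_eq_zero.1 z2)
end

section
/- Let m ∈ ℝ, let a < b be real numbers, let z ∈ ℂ, let k ∈ ℂ with k ≠ 0 and k² = z² − m², set α = (z+m)/k and s = sin(k(b−a)), and assume s ≠ 0. Let f = (f¹,f²) : [a,b] → ℂ² be continuous. Define u : [a,b] → ℂ² by u(x) = (α/s)·[ (sin(k(b−x)), (i/α)·cos(k(b−x))) · ∫_a^x ( sin(k(y−a))·f¹(y) + (i/α)·cos(k(y−a))·f²(y) ) dy + (sin(k(x−a)), −(i/α)·cos(k(x−a))) · ∫_x^b ( sin(k(b−y))·f¹(y) − (i/α)·cos(k(b−y))·f²(y) ) dy ], where each bracketed pair denotes a vector in ℂ² multiplied by the scalar integral. Then u is continuous on [a,b], differentiable on (a,b), it satisfies −i σ₁ u'(x) + m σ₃ u(x) − z u(x) = f(x) for all x ∈ (a,b), and u¹(a) = u¹(b) = 0. -/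
open Set intervalIntegral

private lemma hder_ofReal (x : ℝ) : HasDerivAt (fun y : ℝ => (y : ℂ)) 1 x := by
  exact Complex.ofRealCLM.hasDerivAt

private lemma hder_sin_right (k c : ℂ) (x : ℝ) :
    HasDerivAt (fun y : ℝ => Complex.sin (k * (c - (y : ℂ))))
      (-(k * Complex.cos (k * (c - (x : ℂ))))) x := by
  have hc : HasDerivAt (fun y : ℝ => k * (c - (y : ℂ))) (-k) x := by
    simpa using ((hder_ofReal x).const_sub c).const_mul k
  have := (Complex.hasDerivAt_sin (k * (c - (x : ℂ)))).scomp x hc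
  simpa [Function.comp_def, smul_eq_mul] using this.neg.neg

private lemma hder_sin_left (k c : ℂ) (x : ℝ) :
    HasDerivAt (fun y : ℝ => Complex.sin (k * ((y : ℂ) - c)))
      (k * Complex.cos (k * ((x : ℂ) - c))) x := by
  have hc : HasDerivAt (fun y : ℝ => k * ((y : ℂ) - c)) k x := by
    simpa using ((hder_ofReal x).sub_const c).const_mul k
  have := (Complex.hasDerivAt_sin (k * ((x : ℂ) - c))).scomp x hc
  simpa [Function.comp_def, smul_eq_mul, mul_comm] using this

private lemma hder_cos_right (k c : ℂ) (x : ℝ) :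
    HasDerivAt (fun y : ℝ => Complex.cos (k * (c - (y : ℂ))))
      (k * Complex.sin (k * (c - (x : ℂ)))) x := by
  have hc : HasDerivAt (fun y : ℝ => k * (c - (y : ℂ))) (-k) x := by
    simpa using ((hder_ofReal x).const_sub c).const_mul k
  have := (Complex.hasDerivAt_cos (k * (c - (x : ℂ)))).scomp x hc
  simpa [Function.comp_def, smul_eq_mul] using this

private lemma hder_cos_left (k c : ℂ) (x : ℝ) :
    HasDerivAt (fun y : ℝ => Complex.cos (k * ((y : ℂ) - c)))
      (-(k * Complex.sin (k * ((x : ℂ) - c)))) x := by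
  have hc : HasDerivAt (fun y : ℝ => k * ((y : ℂ) - c)) k x := by
    simpa using ((hder_ofReal x).sub_const c).const_mul k
  have := (Complex.hasDerivAt_cos (k * ((x : ℂ) - c))).scomp x hc
  simpa [Function.comp_def, smul_eq_mul, mul_comm] using this

private lemma alg1 (I αc kc S Sb Cb Sa Ca F G p q : ℂ) (hα0 : αc ≠ 0) (hS0 : S ≠ 0)
    (hI : I ^ 2 = -1) (hsx : S = Sb * Ca + Cb * Sa) :
    I * (αc * kc) * (αc / S * (I / αc * Cb * F + -(I / αc) * Ca * G)) + I * q =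
      αc / S * ((-(kc * Cb) * F + Sb * (Sa * p + I / αc * Ca * q)) +
        (kc * Ca * G + Sa * -(Sb * p - I / αc * Cb * q))) := by
  subst hsx
  field_simp
  ring_nf
  simp only [hI]
  ring

private lemma alg2 (I αc kc S Sb Cb Sa Ca F G p q : ℂ) (hα0 : αc ≠ 0) (hS0 : S ≠ 0)
    (hsx : S = Sb * Ca + Cb * Sa) :
    I * kc / αc * (αc / S * (Sb * F + Sa * G)) + I * p =
      αc / S * ((I / αc * (kc * Sb) * F + I / αc * Cb * (Sa * p + I / αc * Ca * q)) +
        (-(I / αc) * -(kc * Sa) * G + -(I / αc) * Ca * -(Sb * p - I / αc * Cb * q))) := by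
  subst hsx
  field_simp
  ring

/-- The explicit Green-kernel formula gives the resolvent `(D⁰ - z)⁻¹ f` of the
reference Dirac operator on `(a,b)` with boundary conditions `u¹(a) = u¹(b) = 0`:
the function `u` defined by the kernel is continuous on `[a,b]`, differentiable on
`(a,b)`, satisfies `-i σ₁ u' + m σ₃ u - z u = f` there, and `u¹(a) = u¹(b) = 0`. -/
theorem stmt9 (m a b : ℝ) (hab : a < b) (z k : ℂ) (hk : k ≠ 0)
    (hk2 : k ^ 2 = z ^ 2 - (m : ℂ) ^ 2) (α s : ℂ) (hα : α = (z + (m : ℂ)) / k)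
    (hs : s = Complex.sin (k * ((b : ℂ) - (a : ℂ)))) (hs0 : s ≠ 0)
    (f₁ f₂ : ℝ → ℂ)
    (hf₁ : ContinuousOn f₁ (Set.Icc a b)) (hf₂ : ContinuousOn f₂ (Set.Icc a b))
    (u₁ u₂ : ℝ → ℂ)
    (hu₁ : ∀ x : ℝ, u₁ x = (α / s) *
      (Complex.sin (k * ((b : ℂ) - (x : ℂ))) *
          (∫ y in a..x, (Complex.sin (k * ((y : ℂ) - (a : ℂ))) * f₁ y +
            (Complex.I / α) * Complex.cos (k * ((y : ℂ) - (a : ℂ))) * f₂ y)) +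
        Complex.sin (k * ((x : ℂ) - (a : ℂ))) *
          (∫ y in x..b, (Complex.sin (k * ((b : ℂ) - (y : ℂ))) * f₁ y -
            (Complex.I / α) * Complex.cos (k * ((b : ℂ) - (y : ℂ))) * f₂ y))))
    (hu₂ : ∀ x : ℝ, u₂ x = (α / s) *
      ((Complex.I / α) * Complex.cos (k * ((b : ℂ) - (x : ℂ))) *
          (∫ y in a..x, (Complex.sin (k * ((y : ℂ) - (a : ℂ))) * f₁ y +
            (Complex.I / α) * Complex.cos (k * ((y : ℂ) - (a : ℂ))) * f₂ y)) +
        (-(Complex.I / α)) * Complex.cos (k * ((x : ℂ) - (a : ℂ))) *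
          (∫ y in x..b, (Complex.sin (k * ((b : ℂ) - (y : ℂ))) * f₁ y -
            (Complex.I / α) * Complex.cos (k * ((b : ℂ) - (y : ℂ))) * f₂ y)))) :
    ContinuousOn u₁ (Set.Icc a b) ∧ ContinuousOn u₂ (Set.Icc a b) ∧
    (∀ x ∈ Set.Ioo a b, DifferentiableAt ℝ u₁ x ∧ DifferentiableAt ℝ u₂ x ∧
      (-Complex.I) * deriv u₂ x + (m : ℂ) * u₁ x - z * u₁ x = f₁ x ∧
      (-Complex.I) * deriv u₁ x - (m : ℂ) * u₂ x - z * u₂ x = f₂ x) ∧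
    u₁ a = 0 ∧ u₁ b = 0 := by
  have hzm : z + (m : ℂ) ≠ 0 := by
    intro h
    apply hk
    have h2 : k ^ 2 = 0 := by rw [hk2]; linear_combination (z - (m : ℂ)) * h
    exact pow_eq_zero_iff two_ne_zero |>.mp h2
  have hα0 : α ≠ 0 := by rw [hα]; exact div_ne_zero hzm hk
  have hc1 : k + ((m : ℂ) - z) * α = 0 := by
    rw [hα]
    field_simp
    linear_combination hk2
  have hc2 : α * k - ((m : ℂ) + z) = 0 := by
    rw [hα]; field_simp; ring
  -- the two kernel integrands
  set g : ℝ → ℂ := fun y => Complex.sin (k * ((y : ℂ) - (a : ℂ))) * f₁ y +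
      (Complex.I / α) * Complex.cos (k * ((y : ℂ) - (a : ℂ))) * f₂ y with hgdef
  set h : ℝ → ℂ := fun y => Complex.sin (k * ((b : ℂ) - (y : ℂ))) * f₁ y -
      (Complex.I / α) * Complex.cos (k * ((b : ℂ) - (y : ℂ))) * f₂ y with hhdef
  have hcsin_left : Continuous fun y : ℝ => Complex.sin (k * ((y : ℂ) - (a : ℂ))) :=
    Complex.continuous_sin.comp (continuous_const.mul (Complex.continuous_ofReal.sub continuous_const))
  have hcsin_right : Continuous fun y : ℝ => Complex.sin (k * ((b : ℂ) - (y : ℂ))) :=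
    Complex.continuous_sin.comp (continuous_const.mul (continuous_const.sub Complex.continuous_ofReal))
  have hccos_left : Continuous fun y : ℝ => Complex.cos (k * ((y : ℂ) - (a : ℂ))) :=
    Complex.continuous_cos.comp (continuous_const.mul (Complex.continuous_ofReal.sub continuous_const))
  have hccos_right : Continuous fun y : ℝ => Complex.cos (k * ((b : ℂ) - (y : ℂ))) :=
    Complex.continuous_cos.comp (continuous_const.mul (continuous_const.sub Complex.continuous_ofReal))
  have hgc : ContinuousOn g (Set.Icc a b) :=
    (hcsin_left.continuousOn.mul hf₁).add
      (((continuous_const.mul hccos_left).continuousOn).mul hf₂)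
  have hhc : ContinuousOn h (Set.Icc a b) :=
    (hcsin_right.continuousOn.mul hf₁).sub
      (((continuous_const.mul hccos_right).continuousOn).mul hf₂)
  have huIcc : uIcc a b = Set.Icc a b := uIcc_of_le hab.le
  -- primitives
  have hFc : ContinuousOn (fun x => ∫ y in a..x, g y) (Set.Icc a b) := by
    have := intervalIntegral.continuousOn_primitive_interval (μ := MeasureTheory.volume)
      (f := g) (a := a) (b := b) (by rw [huIcc]; exact hgc.integrableOn_Icc)
    rwa [huIcc] at this
  have hGc : ContinuousOn (fun x => ∫ y in x..b, h y) (Set.Icc a b) := by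
    have := intervalIntegral.continuousOn_primitive_interval_left (μ := MeasureTheory.volume)
      (f := h) (a := a) (b := b) (by rw [huIcc]; exact hhc.integrableOn_Icc)
    rwa [huIcc] at this
  have hFd : ∀ x ∈ Set.Ioo a b, HasDerivAt (fun x => ∫ y in a..x, g y) (g x) x := by
    intro x hx
    refine intervalIntegral.integral_hasDerivAt_right
      ((hgc.mono ?_).intervalIntegrable) ?_ (hgc.continuousAt (Icc_mem_nhds hx.1 hx.2))
    · rw [uIcc_of_le hx.1.le]; exact Icc_subset_Icc le_rfl hx.2.le
    · exact ContinuousOn.stronglyMeasurableAtFilter isOpen_Ioo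
        (hgc.mono Ioo_subset_Icc_self) x hx
  have hGd : ∀ x ∈ Set.Ioo a b, HasDerivAt (fun x => ∫ y in x..b, h y) (-h x) x := by
    intro x hx
    refine intervalIntegral.integral_hasDerivAt_left
      ((hhc.mono ?_).intervalIntegrable) ?_ (hhc.continuousAt (Icc_mem_nhds hx.1 hx.2))
    · rw [uIcc_of_le hx.2.le]; exact Icc_subset_Icc hx.1.le le_rfl
    · exact ContinuousOn.stronglyMeasurableAtFilter isOpen_Ioo
        (hhc.mono Ioo_subset_Icc_self) x hx
  refine ⟨?_, ?_, ?_, ?_, ?_⟩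
  · exact (continuousOn_const.mul ((hcsin_right.continuousOn.mul hFc).add
      (hcsin_left.continuousOn.mul hGc))).congr (fun x _ => hu₁ x)
  · exact (continuousOn_const.mul
      (((continuous_const.mul hccos_right).continuousOn.mul hFc).add
        ((continuous_const.mul hccos_left).continuousOn.mul hGc))).congr (fun x _ => hu₂ x)
  · intro x hx
    have hsx : s = Complex.sin (k * ((b : ℂ) - (x : ℂ))) * Complex.cos (k * ((x : ℂ) - (a : ℂ))) +
        Complex.cos (k * ((b : ℂ) - (x : ℂ))) * Complex.sin (k * ((x : ℂ) - (a : ℂ))) := by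
      rw [hs, show k * ((b : ℂ) - (a : ℂ)) =
        k * ((b : ℂ) - (x : ℂ)) + k * ((x : ℂ) - (a : ℂ)) by ring, Complex.sin_add]
    have hS0 : Complex.sin (k * ((b : ℂ) - (x : ℂ))) * Complex.cos (k * ((x : ℂ) - (a : ℂ))) +
        Complex.cos (k * ((b : ℂ) - (x : ℂ))) * Complex.sin (k * ((x : ℂ) - (a : ℂ))) ≠ 0 := by
      rw [← hsx]; exact hs0
    have hF' := hFd x hx
    have hG' := hGd x hx
    have raw1 : HasDerivAt u₁ _ x :=
      HasDerivAt.congr_of_eventuallyEq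
        ((((hder_sin_right k (b : ℂ) x).mul hF').add
          ((hder_sin_left k (a : ℂ) x).mul hG')).const_mul (α / s))
        (Filter.Eventually.of_forall hu₁)
    have raw2 : HasDerivAt u₂ _ x :=
      HasDerivAt.congr_of_eventuallyEq
        (((((hder_cos_right k (b : ℂ) x).const_mul (Complex.I / α)).mul hF').add
          (((hder_cos_left k (a : ℂ) x).const_mul (-(Complex.I / α))).mul hG')).const_mul (α / s))
        (Filter.Eventually.of_forall hu₂)
    have hd1 : HasDerivAt u₁ (Complex.I * (α * k) * u₂ x + Complex.I * f₂ x) x := by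
      have e := alg1 Complex.I α k s (Complex.sin (k * ((b : ℂ) - (x : ℂ))))
        (Complex.cos (k * ((b : ℂ) - (x : ℂ)))) (Complex.sin (k * ((x : ℂ) - (a : ℂ))))
        (Complex.cos (k * ((x : ℂ) - (a : ℂ)))) (∫ y in a..x, g y) (∫ y in x..b, h y)
        (f₁ x) (f₂ x) hα0 hs0 Complex.I_sq hsx
      rw [hu₂ x, e]
      exact raw1
    have hd2 : HasDerivAt u₂ (Complex.I * k / α * u₁ x + Complex.I * f₁ x) x := by
      have e := alg2 Complex.I α k s (Complex.sin (k * ((b : ℂ) - (x : ℂ))))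
        (Complex.cos (k * ((b : ℂ) - (x : ℂ)))) (Complex.sin (k * ((x : ℂ) - (a : ℂ))))
        (Complex.cos (k * ((x : ℂ) - (a : ℂ)))) (∫ y in a..x, g y) (∫ y in x..b, h y)
        (f₁ x) (f₂ x) hα0 hs0 hsx
      rw [hu₁ x, e]
      exact raw2
    refine ⟨hd1.differentiableAt, hd2.differentiableAt, ?_, ?_⟩
    · rw [hd2.deriv]
      linear_combination (-(k * u₁ x / α + f₁ x)) * Complex.I_sq + (u₁ x / α) * hc1 + (-(u₁ x * ((m : ℂ) - z))) * mul_inv_cancel₀ hα0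
    · rw [hd1.deriv]
      linear_combination (-(α * k * u₂ x + f₂ x)) * Complex.I_sq + u₂ x * hc2
  · rw [hu₁ a]; simp
  · rw [hu₁ b]; simp
end

section
/- Let m ∈ ℝ, a ∈ ℝ, z ∈ ℂ, and let k ∈ ℂ with Im k > 0 and k² = z² − m²; set α = (z+m)/k and define η(x) = e^{i k (x−a)} · (1, 1/α) for x ∈ (a,∞). Then both components of η are square-integrable on (a,∞), and a differentiable function u : (a,∞) → ℂ² satisfying −i σ₁ u' + m σ₃ u = z u on (a,∞) has both components square-integrable on (a,∞) if and only if there exists c ∈ ℂ with u(x) = c·η(x) for all x ∈ (a,∞). -/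
open Set

/-- `g` is square-integrable on `(a,∞)` with respect to Lebesgue measure. -/
def SqInt (g : ℝ → ℂ) (a : ℝ) : Prop :=
  MeasureTheory.IntegrableOn (fun x => ‖g x‖ ^ 2) (Set.Ioi a)

lemma norm_exp_aux (k : ℂ) (x b : ℝ) :
    ‖Complex.exp (Complex.I * k * ((x : ℂ) - (b : ℂ)))‖ = Real.exp (-(k.im) * (x - b)) := by
  rw [Complex.norm_exp]
  congr 1
  simp [Complex.mul_re, Complex.mul_im]

lemma ode_exp {a : ℝ} (μ : ℂ) (g : ℝ → ℂ)
    (hg : ∀ x ∈ Ioi a, HasDerivAt g (μ * g x) x) :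
    ∀ x ∈ Ioi a, ∀ y ∈ Ioi a, g x = g y * Complex.exp (μ * (x - y)) := by
  set h : ℝ → ℂ := fun x => g x * Complex.exp (-μ * x) with hh
  have hder : ∀ x ∈ Ioi a, HasDerivAt h 0 x := by
    intro x hx
    have h1 : HasDerivAt (fun x : ℝ => ((x : ℂ))) 1 x := by
      simpa using (hasDerivAt_id x).ofReal_comp
    have he : HasDerivAt (fun x : ℝ => Complex.exp (-μ * x))
        (Complex.exp (-μ * x) * (-μ * 1)) x := (h1.const_mul (-μ)).cexp
    have := (hg x hx).mul he
    exact this.congr_deriv (by ring)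
  have hconst : ∀ x ∈ Ioi a, ∀ y ∈ Ioi a, h x = h y := by
    intro x hx y hy
    have hdiff : DifferentiableOn ℝ h (Ioi a) := fun x hx =>
      ((hder x hx).differentiableAt).differentiableWithinAt
    refine (convex_Ioi a).is_const_of_fderivWithin_eq_zero hdiff ?_ hx hy
    intro x hx
    rw [fderivWithin_of_isOpen isOpen_Ioi hx]
    have := (hder x hx).hasFDerivAt.fderiv
    rw [this]
    ext
    simp
  intro x hx y hy
  have := hconst x hx y hy
  simp only [hh] at this
  have hx1 : Complex.exp (-μ * (x : ℂ)) * Complex.exp (μ * (x : ℂ)) = 1 := by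
    rw [← Complex.exp_add]; simp
  calc g x = g x * Complex.exp (-μ * (x : ℂ)) * Complex.exp (μ * (x : ℂ)) := by
        rw [mul_assoc, hx1, mul_one]
    _ = g y * Complex.exp (-μ * (y : ℂ)) * Complex.exp (μ * (x : ℂ)) := by rw [this]
    _ = g y * Complex.exp (μ * ((x : ℂ) - (y : ℂ))) := by
        rw [mul_assoc, ← Complex.exp_add]; congr 2; ring

/-- For `Im k > 0`, `k² = z² - m²`, `α = (z+m)/k`, the function
`η(x) = e^{ik(x-a)} (1, 1/α)` is square-integrable on `(a,∞)`, and a differentiable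
solution of `-i σ₁ u' + m σ₃ u = z u` on `(a,∞)` is square-integrable iff it is a
multiple of `η`. -/
theorem stmt10 (m a : ℝ) (z k : ℂ) (hk : 0 < k.im)
    (hk2 : k ^ 2 = z ^ 2 - (m : ℂ) ^ 2) (α : ℂ) (hα : α = (z + (m : ℂ)) / k) :
    SqInt (fun x : ℝ => Complex.exp (Complex.I * k * ((x : ℂ) - (a : ℂ)))) a ∧
    SqInt (fun x : ℝ => Complex.exp (Complex.I * k * ((x : ℂ) - (a : ℂ))) / α) a ∧
    (∀ u₁ u₂ : ℝ → ℂ,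
      (∀ x ∈ Ioi a, DifferentiableAt ℝ u₁ x ∧ DifferentiableAt ℝ u₂ x ∧
        (-Complex.I) * deriv u₂ x + (m : ℂ) * u₁ x = z * u₁ x ∧
        (-Complex.I) * deriv u₁ x - (m : ℂ) * u₂ x = z * u₂ x) →
      ((SqInt u₁ a ∧ SqInt u₂ a) ↔
        ∃ c : ℂ, ∀ x ∈ Ioi a,
          u₁ x = c * Complex.exp (Complex.I * k * ((x : ℂ) - (a : ℂ))) ∧
          u₂ x = c * Complex.exp (Complex.I * k * ((x : ℂ) - (a : ℂ))) / α)) := by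
  have hk0 : k ≠ 0 := by
    intro h; rw [h] at hk; simp at hk
  have hfac : k ^ 2 = (z + (m:ℂ)) * (z - (m:ℂ)) := by rw [hk2]; ring
  have hzm : z + (m:ℂ) ≠ 0 := by
    intro h; apply hk0
    have h2 : k ^ 2 = 0 := by rw [hfac, h, zero_mul]
    exact pow_eq_zero_iff (n := 2) (by norm_num) |>.mp h2
  have hzm' : z - (m:ℂ) ≠ 0 := by
    intro h; apply hk0
    have h2 : k ^ 2 = 0 := by rw [hfac, h, mul_zero]
    exact pow_eq_zero_iff (n := 2) (by norm_num) |>.mp h2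
  have hα0 : α ≠ 0 := by rw [hα]; exact div_ne_zero hzm hk0
  have hkα : k * α = z + (m:ℂ) := by rw [hα]; field_simp
  have hαzm : α * (z - (m:ℂ)) = k := by
    rw [hα]; field_simp; linear_combination -hfac
  -- square integrability of the exponential
  set E : ℝ → ℂ := fun x => Complex.exp (Complex.I * k * ((x : ℂ) - (a : ℂ))) with hE
  have hEnorm : ∀ x : ℝ, ‖E x‖ ^ 2 = Real.exp (2 * k.im * a) * Real.exp (-(2 * k.im) * x) := by
    intro x
    rw [hE, norm_exp_aux, sq, ← Real.exp_add, ← Real.exp_add]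
    congr 1; ring
  have hE1 : SqInt E a := by
    have h := (exp_neg_integrableOn_Ioi a (by positivity : (0:ℝ) < 2 * k.im)).const_mul
      (Real.exp (2 * k.im * a))
    unfold SqInt
    have heq : (fun x : ℝ => ‖E x‖ ^ 2) =
        fun x : ℝ => Real.exp (2 * k.im * a) * Real.exp (-(2 * k.im) * x) := funext hEnorm
    rw [heq]
    exact h
  have hE2 : SqInt (fun x : ℝ => E x / α) a := by
    have h := hE1.mul_const ((‖α‖ ^ 2)⁻¹)
    unfold SqInt at h ⊢
    have heq : (fun x : ℝ => ‖E x / α‖ ^ 2) = fun x : ℝ => ‖E x‖ ^ 2 * (‖α‖ ^ 2)⁻¹ := by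
      funext x; rw [norm_div, div_pow, div_eq_mul_inv]
    rw [heq]
    exact h
  refine ⟨hE1, hE2, ?_⟩
  intro u₁ u₂ hu
  -- derivative formulas
  have hd1 : ∀ x ∈ Ioi a, HasDerivAt u₁ (Complex.I * (z + (m:ℂ)) * u₂ x) x := by
    intro x hx
    obtain ⟨h1, h2, e1, e2⟩ := hu x hx
    have hderiv : deriv u₁ x = Complex.I * (z + (m:ℂ)) * u₂ x := by
      linear_combination Complex.I * e2 + deriv u₁ x * Complex.I_sq
    exact hderiv ▸ h1.hasDerivAt
  have hd2 : ∀ x ∈ Ioi a, HasDerivAt u₂ (Complex.I * (z - (m:ℂ)) * u₁ x) x := by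
    intro x hx
    obtain ⟨h1, h2, e1, e2⟩ := hu x hx
    have hderiv : deriv u₂ x = Complex.I * (z - (m:ℂ)) * u₁ x := by
      linear_combination Complex.I * e1 + deriv u₂ x * Complex.I_sq
    exact hderiv ▸ h2.hasDerivAt
  set p : ℝ → ℂ := fun x => u₁ x + α * u₂ x with hp
  set q : ℝ → ℂ := fun x => u₁ x - α * u₂ x with hq
  have hdp : ∀ x ∈ Ioi a, HasDerivAt p ((Complex.I * k) * p x) x := by
    intro x hx
    have h := (hd1 x hx).add ((hd2 x hx).const_mul α)
    refine h.congr_deriv ?_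
    simp only [hp]
    linear_combination -((Complex.I * u₂ x) * hkα - (Complex.I * u₁ x) * hαzm)
  have hdq : ∀ x ∈ Ioi a, HasDerivAt q ((-(Complex.I * k)) * q x) x := by
    intro x hx
    have h := (hd1 x hx).sub ((hd2 x hx).const_mul α)
    refine h.congr_deriv ?_
    simp only [hq]
    linear_combination -((Complex.I * u₂ x) * hkα + (Complex.I * u₁ x) * hαzm)
  have hpode := ode_exp (Complex.I * k) p hdp
  have hqode := ode_exp (-(Complex.I * k)) q hdq
  set x₀ : ℝ := a + 1 with hx₀def
  have hx₀ : x₀ ∈ Ioi a := by simp [hx₀def]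
  constructor
  · rintro ⟨s1, s2⟩
    -- continuity
    have hc1 : ContinuousOn u₁ (Ioi a) := fun x hx => ((hu x hx).1.continuousAt).continuousWithinAt
    have hc2 : ContinuousOn u₂ (Ioi a) := fun x hx =>
      ((hu x hx).2.1.continuousAt).continuousWithinAt
    have hcq : ContinuousOn q (Ioi a) := hc1.sub (continuousOn_const.mul hc2)
    have hqint : MeasureTheory.IntegrableOn (fun x => ‖q x‖ ^ 2) (Ioi a) := by
      apply MeasureTheory.Integrable.mono'
        (g := fun x => 2 * ‖u₁ x‖ ^ 2 + 2 * ‖α‖ ^ 2 * ‖u₂ x‖ ^ 2)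
      · exact (s1.const_mul 2).add (s2.const_mul (2 * ‖α‖ ^ 2))
      · exact ((hcq.norm).pow 2).aestronglyMeasurable measurableSet_Ioi
      · refine Filter.Eventually.of_forall fun x => ?_
        rw [Real.norm_eq_abs, abs_of_nonneg (by positivity)]
        have hle : ‖q x‖ ≤ ‖u₁ x‖ + ‖α‖ * ‖u₂ x‖ := by
          simpa [hq, norm_mul] using norm_sub_le (u₁ x) (α * u₂ x)
        nlinarith [norm_nonneg (q x), norm_nonneg (u₁ x), norm_nonneg (u₂ x), norm_nonneg α,
          sq_nonneg (‖u₁ x‖ - ‖α‖ * ‖u₂ x‖), mul_nonneg (norm_nonneg α) (norm_nonneg (u₂ x)), hle]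
    have hq0 : q x₀ = 0 := by
      by_contra hne
      have hgrow : ∀ x ∈ Ioi x₀, ‖q x₀‖ ^ 2 ≤ ‖q x‖ ^ 2 := by
        intro x hx
        have hxa : x ∈ Ioi a := lt_trans (show a < x₀ by linarith [hx₀def]) hx
        have hfor : q x = q x₀ * Complex.exp (-(Complex.I * k) * ((x:ℂ) - (x₀:ℂ))) :=
          hqode x hxa x₀ hx₀
        have hrw : -(Complex.I * k) * ((x:ℂ) - (x₀:ℂ)) =
            Complex.I * (-k) * ((x:ℂ) - (x₀:ℂ)) := by ring
        have hnorm : ‖Complex.exp (-(Complex.I * k) * ((x:ℂ) - (x₀:ℂ)))‖ =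
            Real.exp (k.im * (x - x₀)) := by
          rw [hrw, norm_exp_aux]; congr 1; simp
        have hone : (1:ℝ) ≤ Real.exp (k.im * (x - x₀)) := by
          rw [Real.one_le_exp_iff]
          have hxx : (0:ℝ) ≤ x - x₀ := by have := mem_Ioi.mp hx; linarith
          exact mul_nonneg hk.le hxx
        rw [hfor, norm_mul, hnorm]
        have he2 : (1:ℝ) ≤ Real.exp (k.im * (x - x₀)) ^ 2 := by nlinarith [hone]
        calc ‖q x₀‖ ^ 2 = ‖q x₀‖ ^ 2 * 1 := by ring
          _ ≤ ‖q x₀‖ ^ 2 * (Real.exp (k.im * (x - x₀)) ^ 2) :=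
            mul_le_mul_of_nonneg_left he2 (sq_nonneg _)
          _ = (‖q x₀‖ * Real.exp (k.im * (x - x₀))) ^ 2 := by ring
      have hconst : MeasureTheory.IntegrableOn (fun _ : ℝ => ‖q x₀‖ ^ 2) (Ioi x₀) := by
        apply MeasureTheory.Integrable.mono'
          (g := fun x => ‖q x‖ ^ 2)
        · exact hqint.mono_set (Ioi_subset_Ioi (by simp [hx₀def]))
        · exact MeasureTheory.aestronglyMeasurable_const
        · refine (MeasureTheory.ae_restrict_iff' measurableSet_Ioi).2
            (Filter.Eventually.of_forall fun x hx => ?_)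
          rw [Real.norm_eq_abs, abs_of_nonneg (by positivity)]
          exact hgrow x hx
      rw [MeasureTheory.integrableOn_const_iff] at hconst
      rcases hconst with h | h
      · exact hne (norm_eq_zero.mp (pow_eq_zero_iff (n := 2) (by norm_num) |>.mp (enorm_eq_zero.mp h)))
      · rw [Real.volume_Ioi] at h; exact absurd h (by simp)
    refine ⟨u₁ x₀ * Complex.exp (Complex.I * k * ((a:ℂ) - (x₀:ℂ))), ?_⟩
    intro x hx
    have h2 : u₁ x - α * u₂ x = 0 := by
      have := hqode x hx x₀ hx₀
      simp only [hq] at this hq0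
      rw [this, hq0, zero_mul]
    have h3 : u₁ x₀ - α * u₂ x₀ = 0 := hq0
    have hpx : u₁ x + α * u₂ x =
        (u₁ x₀ + α * u₂ x₀) * Complex.exp (Complex.I * k * ((x:ℂ) - (x₀:ℂ))) :=
      hpode x hx x₀ hx₀
    have hexp : Complex.exp (Complex.I * k * ((a:ℂ) - (x₀:ℂ))) *
        Complex.exp (Complex.I * k * ((x:ℂ) - (a:ℂ))) =
        Complex.exp (Complex.I * k * ((x:ℂ) - (x₀:ℂ))) := by
      rw [← Complex.exp_add]; congr 1; ring
    have e1 : u₁ x = u₁ x₀ * Complex.exp (Complex.I * k * ((a:ℂ) - (x₀:ℂ))) *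
        Complex.exp (Complex.I * k * ((x:ℂ) - (a:ℂ))) := by
      have htwo : (2:ℂ) * u₁ x =
          2 * u₁ x₀ * Complex.exp (Complex.I * k * ((x:ℂ) - (x₀:ℂ))) := by
        linear_combination hpx + h2 - Complex.exp (Complex.I * k * ((x:ℂ) - (x₀:ℂ))) * h3
      linear_combination (1/2 : ℂ) * htwo - u₁ x₀ * hexp
    refine ⟨e1, ?_⟩
    rw [eq_div_iff hα0]
    linear_combination -h2 + e1
  · rintro ⟨c, hc⟩
    have hbase : MeasureTheory.IntegrableOn (fun x : ℝ => ‖c‖ ^ 2 * ‖E x‖ ^ 2) (Ioi a) :=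
      hE1.const_mul (‖c‖ ^ 2)
    constructor
    · unfold SqInt
      refine MeasureTheory.IntegrableOn.congr_fun hbase ?_ measurableSet_Ioi
      intro x hx
      show ‖c‖ ^ 2 * ‖E x‖ ^ 2 = ‖u₁ x‖ ^ 2
      rw [(hc x hx).1, norm_mul, mul_pow]
    · unfold SqInt
      have hbase2 : MeasureTheory.IntegrableOn
          (fun x : ℝ => ‖c‖ ^ 2 * ‖E x‖ ^ 2 * (‖α‖ ^ 2)⁻¹) (Ioi a) :=
        hbase.mul_const _
      refine MeasureTheory.IntegrableOn.congr_fun hbase2 ?_ measurableSet_Ioi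
      intro x hx
      show ‖c‖ ^ 2 * ‖E x‖ ^ 2 * (‖α‖ ^ 2)⁻¹ = ‖u₂ x‖ ^ 2
      rw [(hc x hx).2, norm_div, div_pow, norm_mul, mul_pow, div_eq_mul_inv]
end

section
/- Let m ∈ ℝ, a ∈ ℝ, and let z ∈ ℂ be such that z² − m² is a nonnegative real number. If u : (a,∞) → ℂ² is differentiable, satisfies −i σ₁ u' + m σ₃ u = z u on (a,∞), and both components of u are square-integrable on (a,∞), then u(x) = 0 for all x ∈ (a,∞). -/
open Set

lemma constOn {f : ℝ → ℂ} {a : ℝ} (hf : ∀ x ∈ Ioi a, HasDerivAt f 0 x) :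
    ∀ x ∈ Ioi a, ∀ y ∈ Ioi a, f x = f y := by
  intro x hx y hy
  refine (convex_Ioi a).is_const_of_fderivWithin_eq_zero
    (fun p hp => (hf p hp).differentiableAt.differentiableWithinAt)
    (fun p hp => ?_) hx hy
  rw [fderivWithin_of_isOpen isOpen_Ioi hp, (hf p hp).hasFDerivAt.fderiv]
  ext1; simp

lemma constZero {E : Type*} [NormedAddCommGroup E] {g : ℝ → E} {a : ℝ}
    (hc : ∀ x ∈ Ioi a, ∀ y ∈ Ioi a, g x = g y)
    (hint : MeasureTheory.IntegrableOn g (Ioi a)) : ∀ x ∈ Ioi a, g x = 0 := by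
  intro x hx
  have heq : EqOn g (fun _ => g x) (Ioi a) := fun y hy => hc y hy x hx
  have h2 : MeasureTheory.IntegrableOn (fun _ => g x) (Ioi a) :=
    hint.congr_fun heq measurableSet_Ioi
  rcases (MeasureTheory.integrableOn_const_iff enorm_ne_top).mp h2 with h0 | hfin
  · simpa using h0
  · rw [Real.volume_Ioi] at hfin; exact absurd hfin (by simp)

lemma key (r m t a : ℝ) (ht : 0 ≤ t) (hr : (r:ℂ)^2 = (m:ℂ)^2 + (t:ℂ)) (v w : ℝ → ℂ)
    (hv : ∀ x ∈ Ioi a, HasDerivAt v (Complex.I * ((r:ℂ)+(m:ℂ)) * w x) x)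
    (hw : ∀ x ∈ Ioi a, HasDerivAt w (Complex.I * ((r:ℂ)-(m:ℂ)) * v x) x)
    (h1 : SqInt v a) (h2 : SqInt w a) :
    ∀ x ∈ Ioi a, ((r:ℂ)+(m:ℂ)) * w x = 0 := by
  set Ec : ℝ → ℂ := fun x =>
    ((r:ℂ)+(m:ℂ))^2 * (w x * star (w x)) + (t:ℂ) * (v x * star (v x)) with hEc
  have hEeq : ∀ x, Ec x = (((r+m)^2 * ‖w x‖^2 + t * ‖v x‖^2 : ℝ) : ℂ) := by
    intro x
    simp only [hEc, Complex.star_def, Complex.mul_conj, Complex.normSq_eq_norm_sq]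
    push_cast
    ring
  have hE : ∀ x ∈ Ioi a, HasDerivAt Ec 0 x := by
    intro x hx
    have h1' := hv x hx
    have h2' := hw x hx
    have hD : HasDerivAt Ec
        (((r:ℂ)+(m:ℂ))^2 * ((Complex.I * ((r:ℂ)-(m:ℂ)) * v x) * star (w x)
            + w x * star (Complex.I * ((r:ℂ)-(m:ℂ)) * v x))
          + (t:ℂ) * ((Complex.I * ((r:ℂ)+(m:ℂ)) * w x) * star (v x)
            + v x * star (Complex.I * ((r:ℂ)+(m:ℂ)) * w x))) x :=
      ((h2'.mul h2'.star).const_mul _).add ((h1'.mul h1'.star).const_mul _)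
    convert hD using 1
    simp only [Complex.star_def, map_mul, map_sub, map_add, Complex.conj_I, Complex.conj_ofReal]
    linear_combination (-Complex.I * ((r:ℂ)+(m:ℂ)) *
      (v x * (starRingEnd ℂ) (w x) - w x * (starRingEnd ℂ) (v x))) * hr
  have hconst := constOn hE
  have hintR : MeasureTheory.IntegrableOn
      (fun x => ((r+m)^2 * ‖w x‖^2 + t * ‖v x‖^2 : ℝ)) (Ioi a) :=
    (h2.const_mul _).add (h1.const_mul _)
  have hint : MeasureTheory.IntegrableOn Ec (Ioi a) :=
    MeasureTheory.IntegrableOn.congr_fun hintR.ofReal (fun x _ => (hEeq x).symm) measurableSet_Ioi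
  have hzero := constZero hconst hint
  intro x hx
  have h0 := hzero x hx
  rw [hEeq x] at h0
  have h0' : (r+m)^2 * ‖w x‖^2 + t * ‖v x‖^2 = 0 := by exact_mod_cast h0
  have hsum : (r+m)^2 * ‖w x‖^2 = 0 := by
    nlinarith [sq_nonneg ‖w x‖, sq_nonneg ‖v x‖, sq_nonneg (r+m),
      mul_nonneg ht (sq_nonneg ‖v x‖), mul_nonneg (sq_nonneg (r+m)) (sq_nonneg ‖w x‖)]
  rcases mul_eq_zero.mp hsum with h | h
  · have : r + m = 0 := by nlinarith [sq_nonneg (r+m)]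
    have : ((r:ℂ)+(m:ℂ)) = 0 := by exact_mod_cast congrArg (Complex.ofReal) this
    rw [this, zero_mul]
  · have : w x = 0 := by
      have : ‖w x‖ = 0 := by nlinarith [norm_nonneg (w x)]
      exact norm_eq_zero.mp this
    rw [this, mul_zero]

/-- If `z² - m²` is a nonnegative real number, then the only square-integrable
differentiable solution of `-i σ₁ u' + m σ₃ u = z u` on `(a,∞)` is the zero one. -/
theorem stmt11 (m a : ℝ) (z : ℂ)
    (hz : ∃ t : ℝ, 0 ≤ t ∧ z ^ 2 - (m : ℂ) ^ 2 = (t : ℂ))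
    (u₁ u₂ : ℝ → ℂ)
    (hu : ∀ x ∈ Ioi a, DifferentiableAt ℝ u₁ x ∧ DifferentiableAt ℝ u₂ x ∧
      (-Complex.I) * deriv u₂ x + (m : ℂ) * u₁ x = z * u₁ x ∧
      (-Complex.I) * deriv u₁ x - (m : ℂ) * u₂ x = z * u₂ x)
    (h₁ : SqInt u₁ a) (h₂ : SqInt u₂ a) :
    ∀ x ∈ Ioi a, u₁ x = 0 ∧ u₂ x = 0 := by
  obtain ⟨t, ht, hzt⟩ := hz
  have hz2 : z^2 = (m:ℂ)^2 + t := by linear_combination hzt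
  have hzim := congrArg Complex.im hz2
  have hzre := congrArg Complex.re hz2
  simp [pow_two, Complex.mul_im, Complex.mul_re] at hzim hzre
  have him2 : z.im ^ 2 = 0 := by
    nlinarith [sq_nonneg (z.re * z.im), sq_nonneg z.im, sq_nonneg m,
      mul_nonneg ht (sq_nonneg z.im), sq_nonneg (m * z.im)]
  have him : z.im = 0 := by
    have := sq_eq_zero_iff.mp him2; exact this
  set r := z.re with hrdef
  have hzr : z = (r:ℂ) := Complex.ext rfl (by simp [him])
  have hr : (r:ℂ)^2 = (m:ℂ)^2 + (t:ℂ) := by rw [← hzr]; exact hz2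
  have hv : ∀ x ∈ Ioi a, HasDerivAt u₁ (Complex.I * ((r:ℂ)+(m:ℂ)) * u₂ x) x := by
    intro x hx
    obtain ⟨hd1, hd2, e1, e2⟩ := hu x hx
    have hval : deriv u₁ x = Complex.I * ((r:ℂ)+(m:ℂ)) * u₂ x := by
      rw [← hzr]
      linear_combination Complex.I * e2 + deriv u₁ x * Complex.I_sq
    exact hval ▸ hd1.hasDerivAt
  have hw : ∀ x ∈ Ioi a, HasDerivAt u₂ (Complex.I * ((r:ℂ)-(m:ℂ)) * u₁ x) x := by
    intro x hx
    obtain ⟨hd1, hd2, e1, e2⟩ := hu x hx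
    have hval : deriv u₂ x = Complex.I * ((r:ℂ)-(m:ℂ)) * u₁ x := by
      rw [← hzr]
      linear_combination Complex.I * e1 + deriv u₂ x * Complex.I_sq
    exact hval ▸ hd2.hasDerivAt
  have k1 : ∀ x ∈ Ioi a, ((r:ℂ)+(m:ℂ)) * u₂ x = 0 :=
    key r m t a ht hr u₁ u₂ hv hw h₁ h₂
  have hr' : (r:ℂ)^2 = ((-m:ℝ):ℂ)^2 + (t:ℂ) := by push_cast; linear_combination hr
  have k2 : ∀ x ∈ Ioi a, ((r:ℂ)+((-m:ℝ):ℂ)) * u₁ x = 0 := by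
    refine key r (-m) t a ht hr' u₂ u₁ (fun x hx => ?_) (fun x hx => ?_) h₂ h₁
    · have := hw x hx; push_cast; convert this using 2 <;> try ring
    · have := hv x hx; push_cast; convert this using 2 <;> try ring
  have hv0 : ∀ x ∈ Ioi a, HasDerivAt u₁ 0 x := by
    intro x hx
    have := hv x hx
    rwa [mul_assoc, k1 x hx, mul_zero] at this
  have hw0 : ∀ x ∈ Ioi a, HasDerivAt u₂ 0 x := by
    intro x hx
    have := hw x hx
    have h0 : ((r:ℂ)-(m:ℂ)) * u₁ x = 0 := by
      have := k2 x hx; push_cast at this; linear_combination this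
    rwa [mul_assoc, h0, mul_zero] at this
  have hc1 := constOn hv0
  have hc2 := constOn hw0
  intro x hx
  constructor
  · have := constZero (g := fun x => ‖u₁ x‖^2) (a := a)
      (fun p hp q hq => by show ‖u₁ p‖^2 = ‖u₁ q‖^2; rw [hc1 p hp q hq]) h₁ x hx
    simpa using this
  · have := constZero (g := fun x => ‖u₂ x‖^2) (a := a)
      (fun p hp q hq => by show ‖u₂ p‖^2 = ‖u₂ q‖^2; rw [hc2 p hp q hq]) h₂ x hx
    simpa using this
end

section
/- Let m ≥ 0, a ∈ ℝ, and z ∈ ℂ. If u = (u¹,u²) : [a,∞) → ℂ² is continuous on [a,∞), differentiable on (a,∞), satisfies −i σ₁ u' + m σ₃ u = z u on (a,∞), has both components square-integrable on (a,∞), and satisfies u¹(a) = 0, then u is identically zero. In other words, the half-line reference Dirac operator with boundary condition u¹(a) = 0 has no eigenvalues. -/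
open Set

open MeasureTheory


lemma notIntOn_one (a : ℝ) : ¬ IntegrableOn (fun _ : ℝ => (1:ℝ)) (Ioi a) := by
  intro h
  rw [integrableOn_const_iff] at h
  simp [Real.volume_Ioi] at h

lemma shiftInt {f : ℝ → ℝ} {a : ℝ} (s : ℝ) (h : IntegrableOn f (Ioi a)) :
    IntegrableOn (fun t => f (t + s)) (Ioi (a - s)) := by
  have hmp : MeasurePreserving (· + s) (volume : Measure ℝ) volume :=
    measurePreserving_add_right volume s
  have hme : MeasurableEmbedding (· + s) := (MeasurableEquiv.addRight s).measurableEmbedding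
  have := (hmp.integrableOn_comp_preimage hme (f := f) (s := Ioi a)).2 h
  have hpre : ((· + s) ⁻¹' Ioi a) = Ioi (a - s) := by
    ext x; simp [sub_lt_iff_lt_add]
  rwa [hpre] at this

lemma notInt_cos_sq {A : ℝ} (hA : A ≠ 0) :
    ¬ IntegrableOn (fun t => Real.cos (A * t) ^ 2) (Ioi (0:ℝ)) := by
  intro h
  have hB : 0 < |A| := abs_pos.2 hA
  have habs : (fun t => Real.cos (A * t) ^ 2) = (fun t => Real.cos (|A| * t) ^ 2) := by
    funext t
    rcases abs_cases A with ⟨h1, _⟩ | ⟨h1, _⟩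
    · rw [h1]
    · rw [h1, neg_mul, Real.cos_neg]
  rw [habs] at h
  set s : ℝ := Real.pi / (2 * |A|) with hs
  have hspos : 0 < s := by positivity
  have h2 : IntegrableOn (fun t => Real.cos (|A| * (t + s)) ^ 2) (Ioi (0 - s)) :=
    shiftInt (f := fun t => Real.cos (|A| * t) ^ 2) s h
  have h3 : IntegrableOn (fun t => Real.cos (|A| * (t + s)) ^ 2) (Ioi (0:ℝ)) :=
    h2.mono_set (Ioi_subset_Ioi (by linarith))
  have h4 : IntegrableOn (fun t => Real.sin (|A| * t) ^ 2) (Ioi (0:ℝ)) := by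
    refine h3.congr_fun (fun t _ => ?_) measurableSet_Ioi
    have : |A| * (t + s) = |A| * t + Real.pi / 2 := by
      rw [hs]; field_simp
    dsimp only; rw [this, Real.cos_add_pi_div_two]; ring
  have h5 : IntegrableOn (fun t => Real.cos (|A| * t) ^ 2 + Real.sin (|A| * t) ^ 2)
      (Ioi (0:ℝ)) := h.add h4
  apply notIntOn_one 0
  have he : EqOn (fun _ : ℝ => (1:ℝ))
      (fun t => Real.cos (|A| * t) ^ 2 + Real.sin (|A| * t) ^ 2) (Ioi 0) := by
    intro t _
    simp [Real.cos_sq_add_sin_sq]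
  exact (h5.congr_fun he.symm measurableSet_Ioi)

lemma normSq_cos' (w : ℂ) : ‖Complex.cos w‖ ^ 2 = Real.cos w.re ^ 2 + Real.sinh w.im ^ 2 := by
  rw [Complex.cos_eq, Complex.sq_norm, Complex.normSq_apply]
  have h1 := Real.cosh_sq w.im
  have h2 := Real.sin_sq_add_cos_sq w.re
  simp only [Complex.sub_re, Complex.sub_im, Complex.mul_re, Complex.mul_im,
    Complex.cos_ofReal_re, Complex.cos_ofReal_im, Complex.sin_ofReal_re, Complex.sin_ofReal_im,
    Complex.cosh_ofReal_re, Complex.cosh_ofReal_im, Complex.sinh_ofReal_re,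
    Complex.sinh_ofReal_im, Complex.I_re, Complex.I_im]
  ring_nf
  nlinarith [h1, h2]

lemma notInt_of_one_le {f : ℝ → ℝ} {a T : ℝ} (hT : a ≤ T)
    (hf : ∀ t ∈ Ioi T, (1:ℝ) ≤ f t) (h : IntegrableOn f (Ioi a)) : False := by
  have h1 : IntegrableOn f (Ioi T) := h.mono_set (Ioi_subset_Ioi hT)
  have h2 : IntegrableOn (fun _ : ℝ => (1:ℝ)) (Ioi T) := by
    refine Integrable.mono' h1 aestronglyMeasurable_const ?_
    refine (ae_restrict_iff' measurableSet_Ioi).2 (Filter.Eventually.of_forall ?_)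
    intro x hx
    simpa using hf x hx
  exact notIntOn_one T h2

lemma notInt_cos_c {k : ℂ} (hk : k ≠ 0) (a : ℝ) :
    ¬ IntegrableOn (fun x : ℝ => ‖Complex.cos (k * ((x - a : ℝ) : ℂ))‖ ^ 2) (Ioi a) := by
  intro h
  have h0 : IntegrableOn (fun t : ℝ => ‖Complex.cos (k * t)‖ ^ 2) (Ioi (0:ℝ)) := by
    have h' := shiftInt (f := fun x => ‖Complex.cos (k * ((x - a : ℝ) : ℂ))‖ ^ 2) a h
    rw [sub_self] at h'
    refine h'.congr_fun (fun t _ => ?_) measurableSet_Ioi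
    norm_num
  by_cases him : k.im = 0
  · have hre : k.re ≠ 0 := fun h' => hk (Complex.ext h' him)
    have heq : ∀ t : ℝ, ‖Complex.cos (k * t)‖ ^ 2 = Real.cos (k.re * t) ^ 2 := by
      intro t
      rw [normSq_cos']
      simp [Complex.mul_re, Complex.mul_im, him]
    apply notInt_cos_sq hre
    exact h0.congr_fun (fun t _ => heq t) measurableSet_Ioi
  · have hb : 0 < |k.im| := abs_pos.2 him
    refine notInt_of_one_le (T := 1 / |k.im|) (by positivity) ?_ h0
    intro t ht
    have ht' : 1 / |k.im| < t := ht
    have h1 : 1 ≤ |k.im| * t := by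
      rw [div_lt_iff₀ hb] at ht'
      linarith [ht']
    have htpos : 0 < t := lt_trans (by positivity) ht'
    have h2 : |k.im * t| = |k.im| * t := by
      rw [abs_mul, abs_of_pos htpos]
    have h3 : (1:ℝ) ≤ Real.sinh (k.im * t) ^ 2 := by
      have : 1 ≤ |Real.sinh (k.im * t)| := by
        rw [Real.abs_sinh, h2]
        calc (1:ℝ) ≤ |k.im| * t := h1
        _ ≤ Real.sinh (|k.im| * t) := (Real.self_lt_sinh_iff.2 (by linarith)).le
      calc (1:ℝ) = 1 ^ 2 := by norm_num
      _ ≤ |Real.sinh (k.im * t)| ^ 2 := by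
          apply pow_le_pow_left₀ (by norm_num) this
      _ = Real.sinh (k.im * t) ^ 2 := sq_abs _
    rw [normSq_cos']
    have : (k * (t:ℂ)).im = k.im * t := by simp [Complex.mul_im]
    rw [this]
    nlinarith [sq_nonneg (Real.cos ((k * (t:ℂ)).re))]


lemma const_of_deriv_zero_s12 {a : ℝ} (p : ℝ → ℂ) (hpc : ContinuousOn p (Ici a))
    (hpd : ∀ x ∈ Ioi a, HasDerivAt p 0 x) : ∀ x ∈ Ici a, p x = p a := by
  have step : ∀ y ∈ Ioi a, ∀ x, y ≤ x → p x = p y := by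
    intro y hy x hxy
    have hcont : ContinuousOn p (Icc y x) :=
      hpc.mono (fun t ht => le_trans (le_of_lt hy) ht.1)
    have hderiv : ∀ t ∈ Ico y x, HasDerivWithinAt p 0 (Ici t) t := by
      intro t ht
      exact (hpd t (lt_of_lt_of_le hy ht.1)).hasDerivWithinAt
    exact constant_of_has_deriv_right_zero hcont hderiv x ⟨hxy, le_refl x⟩
  have lim1 : Filter.Tendsto p (nhdsWithin a (Ioi a)) (nhds (p a)) :=
    (hpc a self_mem_Ici).mono (Ioi_subset_Ici le_rfl)
  have lim2 : Filter.Tendsto p (nhdsWithin a (Ioi a)) (nhds (p (a + 1))) := by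
    apply Filter.Tendsto.congr' _ tendsto_const_nhds
    filter_upwards [Ioo_mem_nhdsGT_of_mem (Set.mem_Ico.2 ⟨le_refl a, by linarith⟩ : a ∈ Ico a (a+1))] with x hx
    exact step x hx.1 (a + 1) hx.2.le
  have hpa : p a = p (a + 1) := tendsto_nhds_unique lim1 lim2
  intro x hx
  rcases eq_or_lt_of_le (mem_Ici.1 hx) with h | h
  · rw [← h]
  · rcases le_total x (a + 1) with h' | h'
    · rw [hpa]; exact (step x h (a + 1) h').symm
    · rw [step (a + 1) (by simp : a + 1 ∈ Ioi a) x h', hpa]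


lemma dirac_key (m a : ℝ) (z : ℂ) (C S : ℝ → ℂ)
    (hC : ∀ t, HasDerivAt C (((m:ℂ)^2 - z^2) * S t) t)
    (hS : ∀ t, HasDerivAt S (C t) t)
    (hC0 : C 0 = 1) (hS0 : S 0 = 0)
    (hCS : ∀ t, C t ^ 2 + (z^2 - (m:ℂ)^2) * S t ^ 2 = 1)
    (hNI : ¬ IntegrableOn (fun x => ‖C (x - a)‖ ^ 2) (Ioi a))
    (u₁ u₂ : ℝ → ℂ)
    (hc₁ : ContinuousOn u₁ (Ici a)) (hc₂ : ContinuousOn u₂ (Ici a))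
    (hu : ∀ x ∈ Ioi a, DifferentiableAt ℝ u₁ x ∧ DifferentiableAt ℝ u₂ x ∧
      (-Complex.I) * deriv u₂ x + (m : ℂ) * u₁ x = z * u₁ x ∧
      (-Complex.I) * deriv u₁ x - (m : ℂ) * u₂ x = z * u₂ x)
    (h₂ : SqInt u₂ a) (hbc : u₁ a = 0) :
    ∀ x ∈ Ici a, u₁ x = 0 ∧ u₂ x = 0 := by
  -- continuity of C and S
  have hCcont : Continuous C := by
    rw [continuous_iff_continuousAt]; exact fun t => (hC t).differentiableAt.continuousAt
  have hScont : Continuous S := by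
    rw [continuous_iff_continuousAt]; exact fun t => (hS t).differentiableAt.continuousAt
  -- derivatives of u₁ u₂
  have hd₁ : ∀ x ∈ Ioi a, HasDerivAt u₁ (Complex.I * (z + m) * u₂ x) x := by
    intro x hx
    obtain ⟨d1, _, _, e2⟩ := hu x hx
    have hde : deriv u₁ x = Complex.I * (z + m) * u₂ x := by
      linear_combination Complex.I * e2 + deriv u₁ x * Complex.I_sq
    rw [← hde]; exact d1.hasDerivAt
  have hd₂ : ∀ x ∈ Ioi a, HasDerivAt u₂ (Complex.I * (z - m) * u₁ x) x := by
    intro x hx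
    obtain ⟨_, d2, e1, _⟩ := hu x hx
    have hde : deriv u₂ x = Complex.I * (z - m) * u₁ x := by
      linear_combination Complex.I * e1 + deriv u₂ x * Complex.I_sq
    rw [← hde]; exact d2.hasDerivAt
  -- derivative of shifted C and S
  have hCx : ∀ x : ℝ, HasDerivAt (fun x => C (x - a)) (((m:ℂ)^2 - z^2) * S (x - a)) x := by
    intro x
    have h1 : HasDerivAt (fun x : ℝ => x - a) 1 x := (hasDerivAt_id x).sub_const a
    have := (hC (x - a)).scomp x h1
    simpa [Function.comp_def] using this
  have hSx : ∀ x : ℝ, HasDerivAt (fun x => S (x - a)) (C (x - a)) x := by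
    intro x
    have h1 : HasDerivAt (fun x : ℝ => x - a) 1 x := (hasDerivAt_id x).sub_const a
    have := (hS (x - a)).scomp x h1
    simpa [Function.comp_def] using this
  -- the conserved quantities
  have key₁ : ∀ x ∈ Ici a,
      C (x - a) * u₁ x - Complex.I * (z + m) * (S (x - a) * u₂ x) = 0 := by
    have hpc : ContinuousOn
        (fun x => C (x - a) * u₁ x - Complex.I * (z + m) * (S (x - a) * u₂ x)) (Ici a) := by
      apply ContinuousOn.sub
      · exact ((hCcont.comp (continuous_id.sub continuous_const)).continuousOn).mul hc₁
      · exact ContinuousOn.const_smul (((hScont.comp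
          (continuous_id.sub continuous_const)).continuousOn).mul hc₂) (Complex.I * (z + m))
    have hpd : ∀ x ∈ Ioi a, HasDerivAt
        (fun x => C (x - a) * u₁ x - Complex.I * (z + m) * (S (x - a) * u₂ x)) 0 x := by
      intro x hx
      have h1 := ((hCx x).mul (hd₁ x hx)).sub
        (((hSx x).mul (hd₂ x hx)).const_mul (Complex.I * (z + m)))
      convert h1 using 1
      · rfl
      · rfl
      have hI := Complex.I_sq
      linear_combination ((z^2 - (m:ℂ)^2) * S (x - a) * u₁ x) * hI
    intro x hx
    have := const_of_deriv_zero_s12 _ hpc hpd x hx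
    rw [this]
    simp [hC0, hS0, hbc]
  have key₂ : ∀ x ∈ Ici a,
      -(Complex.I * (z - m)) * (S (x - a) * u₁ x) + C (x - a) * u₂ x = u₂ a := by
    have hpc : ContinuousOn
        (fun x => -(Complex.I * (z - m)) * (S (x - a) * u₁ x) + C (x - a) * u₂ x) (Ici a) := by
      apply ContinuousOn.add
      · exact ContinuousOn.const_smul (((hScont.comp
          (continuous_id.sub continuous_const)).continuousOn).mul hc₁) (-(Complex.I * (z - m)))
      · exact ((hCcont.comp (continuous_id.sub continuous_const)).continuousOn).mul hc₂
    have hpd : ∀ x ∈ Ioi a, HasDerivAt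
        (fun x => -(Complex.I * (z - m)) * (S (x - a) * u₁ x) + C (x - a) * u₂ x) 0 x := by
      intro x hx
      have h1 := (((hSx x).mul (hd₁ x hx)).const_mul (-(Complex.I * (z - m)))).add
        ((hCx x).mul (hd₂ x hx))
      convert h1 using 1
      · rfl
      · rfl
      have hI := Complex.I_sq
      linear_combination ((z^2 - (m:ℂ)^2) * S (x - a) * u₂ x) * hI
    intro x hx
    have := const_of_deriv_zero_s12 _ hpc hpd x hx
    rw [this]
    simp [hC0, hS0]
  -- explicit formulas
  have hu₂x : ∀ x ∈ Ici a, u₂ x = C (x - a) * u₂ a := by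
    intro x hx
    have E1 := key₁ x hx
    have E2 := key₂ x hx
    have E3 := hCS (x - a)
    have hI := Complex.I_sq
    linear_combination C (x - a) * E2 + Complex.I * (z - m) * S (x - a) * E1 +
      ((z^2 - (m:ℂ)^2) * S (x - a)^2 * u₂ x) * hI - u₂ x * E3
  have hu₁x : ∀ x ∈ Ici a, u₁ x = Complex.I * (z + m) * S (x - a) * u₂ a := by
    intro x hx
    have E1 := key₁ x hx
    have E2 := key₂ x hx
    have E3 := hCS (x - a)
    have hI := Complex.I_sq
    linear_combination C (x - a) * E1 + Complex.I * (z + m) * S (x - a) * E2 +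
      ((z^2 - (m:ℂ)^2) * S (x - a)^2 * u₁ x) * hI - u₁ x * E3
  -- square-integrability forces u₂ a = 0
  have hc0 : u₂ a = 0 := by
    by_contra hc
    apply hNI
    have h1 : IntegrableOn (fun x => ‖C (x - a) * u₂ a‖ ^ 2) (Ioi a) := by
      refine h₂.congr_fun (fun x hx => ?_) measurableSet_Ioi
      dsimp only; rw [hu₂x x (Ioi_subset_Ici le_rfl hx)]
    have h2 : IntegrableOn (fun x => ‖u₂ a‖ ^ 2 * ‖C (x - a)‖ ^ 2) (Ioi a) := by
      refine h1.congr_fun (fun x _ => ?_) measurableSet_Ioi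
      dsimp only; rw [norm_mul, mul_pow]; ring
    have h3 := h2.const_mul ((‖u₂ a‖ ^ 2)⁻¹)
    have h4 : (fun x => ‖C (x - a)‖ ^ 2) =
        fun x => (‖u₂ a‖ ^ 2)⁻¹ * (‖u₂ a‖ ^ 2 * ‖C (x - a)‖ ^ 2) := by
      funext x
      rw [← mul_assoc, inv_mul_cancel₀ (pow_ne_zero 2 (norm_ne_zero_iff.2 hc)), one_mul]
    rw [h4]
    exact h3
  intro x hx
  constructor
  · rw [hu₁x x hx, hc0]; ring
  · rw [hu₂x x hx, hc0]; ring

/-- The half-line reference Dirac operator with boundary condition `u¹(a) = 0` has no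
eigenvalues: a continuous square-integrable solution of `-i σ₁ u' + m σ₃ u = z u` on
`(a,∞)` with `u¹(a) = 0` vanishes identically. -/
theorem stmt12 (m a : ℝ) (hm : 0 ≤ m) (z : ℂ)
    (u₁ u₂ : ℝ → ℂ)
    (hc₁ : ContinuousOn u₁ (Ici a)) (hc₂ : ContinuousOn u₂ (Ici a))
    (hu : ∀ x ∈ Ioi a, DifferentiableAt ℝ u₁ x ∧ DifferentiableAt ℝ u₂ x ∧
      (-Complex.I) * deriv u₂ x + (m : ℂ) * u₁ x = z * u₁ x ∧
      (-Complex.I) * deriv u₁ x - (m : ℂ) * u₂ x = z * u₂ x)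
    (h₁ : SqInt u₁ a) (h₂ : SqInt u₂ a)
    (hbc : u₁ a = 0) :
    ∀ x ∈ Ici a, u₁ x = 0 ∧ u₂ x = 0 := by
  by_cases hzm : z ^ 2 = (m:ℂ) ^ 2
  · refine dirac_key m a z (fun _ => 1) (fun t => (t:ℂ)) ?_ ?_ rfl ?_ ?_ ?_ u₁ u₂ hc₁ hc₂ hu h₂ hbc
    · intro t
      have : ((m:ℂ)^2 - z^2) * (t:ℂ) = 0 := by rw [hzm]; ring
      rw [this]
      exact hasDerivAt_const t 1
    · intro t
      have := Complex.ofRealCLM.hasDerivAt (x := t)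
      exact this
    · simp
    · intro t
      simp [hzm]
    · intro h
      apply notIntOn_one a
      simpa using h
  · obtain ⟨k, hk2, hk⟩ : ∃ k : ℂ, k ^ (2:ℕ) = z ^ 2 - (m:ℂ) ^ 2 ∧ k ≠ 0 := by
      refine ⟨(z ^ 2 - (m:ℂ) ^ 2) ^ (((2:ℕ):ℂ))⁻¹, ?_, ?_⟩
      · exact Complex.cpow_nat_inv_pow _ (two_ne_zero)
      · intro h
        apply sub_ne_zero_of_ne hzm
        rw [← Complex.cpow_nat_inv_pow (z ^ 2 - (m:ℂ) ^ 2) (two_ne_zero : (2:ℕ) ≠ 0), h]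
        norm_num
    refine dirac_key m a z (fun t => Complex.cos (k * t)) (fun t => Complex.sin (k * t) / k)
      ?_ ?_ ?_ ?_ ?_ (notInt_cos_c hk a) u₁ u₂ hc₁ hc₂ hu h₂ hbc
    · intro t
      have h1 : HasDerivAt (fun w : ℂ => Complex.cos (k * w)) (-Complex.sin (k * t) * k) (t:ℂ) := by
        have h2 : HasDerivAt (fun w : ℂ => k * w) k (t:ℂ) := by
          simpa using (hasDerivAt_id (t:ℂ)).const_mul k
        simpa [Function.comp_def] using (Complex.hasDerivAt_cos (k * t)).comp (t:ℂ) h2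
      have h3 := h1.comp_ofReal
      convert h3 using 1
      have hmz : (m:ℂ)^2 - z^2 = -(k^2) := by rw [hk2]; ring
      rw [hmz]
      field_simp
    · intro t
      have h1 : HasDerivAt (fun w : ℂ => Complex.sin (k * w) / k) (Complex.cos (k * t) * k / k)
          (t:ℂ) := by
        have h2 : HasDerivAt (fun w : ℂ => k * w) k (t:ℂ) := by
          simpa using (hasDerivAt_id (t:ℂ)).const_mul k
        exact (((Complex.hasDerivAt_sin (k * t)).comp (t:ℂ) h2)).div_const k
      have h3 := h1.comp_ofReal
      convert h3 using 1
      field_simp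
    · show Complex.cos (k * ((0:ℝ):ℂ)) = 1
      rw [Complex.ofReal_zero, mul_zero, Complex.cos_zero]
    · show Complex.sin (k * ((0:ℝ):ℂ)) / k = 0
      rw [Complex.ofReal_zero, mul_zero, Complex.sin_zero, zero_div]
    · intro t
      have hid := Complex.sin_sq_add_cos_sq (k * t)
      rw [← hk2]
      field_simp
      linear_combination hid
end

section
/- Let m ∈ ℝ and let z ∈ ℂ be such that z² − m² is not a nonnegative real number. Let k and k'' be the unique complex numbers with strictly positive imaginary part satisfying k² = z² − m² and k''² = (−conj z)² − m², respectively, and set α(z) = (z+m)/k and α(−conj z) = (−conj z + m)/k''. Then α(−conj z) · conj(α(z)) = 1; equivalently, i/α(−conj z) = conj(α(z)/i). -/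
/-- The identity `α(-conj z) · conj(α(z)) = 1`, equivalently
`i/α(-conj z) = conj(α(z)/i)`, for `α(z) = (z+m)/k(z)` with `k(z)` the square root of
`z² - m²` with positive imaginary part. -/
theorem stmt15 (m : ℝ) (z : ℂ)
    (hz : ¬∃ t : ℝ, 0 ≤ t ∧ z ^ 2 - (m : ℂ) ^ 2 = (t : ℂ))
    (k k'' : ℂ) (hk : 0 < k.im) (hk2 : k ^ 2 = z ^ 2 - (m : ℂ) ^ 2)
    (hk'' : 0 < k''.im)
    (hk''2 : k'' ^ 2 = (-(starRingEnd ℂ z)) ^ 2 - (m : ℂ) ^ 2) :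
    ((-(starRingEnd ℂ z) + (m : ℂ)) / k'') * starRingEnd ℂ ((z + (m : ℂ)) / k) = 1 ∧
    Complex.I / ((-(starRingEnd ℂ z) + (m : ℂ)) / k'') =
      starRingEnd ℂ (((z + (m : ℂ)) / k) / Complex.I) := by
  have hk0 : k ≠ 0 := fun h => by simp [h] at hk
  have hck : (starRingEnd ℂ) k ≠ 0 := by simpa using hk0
  have hc : (starRingEnd ℂ k) ^ 2 = (starRingEnd ℂ z) ^ 2 - (m : ℂ) ^ 2 := by
    have := congrArg (starRingEnd ℂ) hk2
    simpa [map_sub, map_pow, Complex.conj_ofReal] using this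
  have hsq : k'' ^ 2 = (-(starRingEnd ℂ) k) ^ 2 := by
    linear_combination hk''2 - hc
  have hkk : k'' = -(starRingEnd ℂ) k := by
    have := sq_eq_sq_iff_eq_or_eq_neg.mp hsq
    rcases this with h | h
    · exact h
    · exfalso
      have : k''.im = -k.im := by
        rw [h]; simp [Complex.conj_im]
      rw [this] at hk''
      linarith
  have h1 : ((-(starRingEnd ℂ z) + (m : ℂ)) / k'') * starRingEnd ℂ ((z + (m : ℂ)) / k) = 1 := by
    rw [hkk, map_div₀, map_add, Complex.conj_ofReal]
    field_simp
    linear_combination -hc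
  refine ⟨h1, ?_⟩
  have hα : starRingEnd ℂ ((z + (m : ℂ)) / k) ≠ 0 := by
    intro h; rw [h, mul_zero] at h1; exact one_ne_zero h1.symm
  have hα'' : ((-(starRingEnd ℂ z) + (m : ℂ)) / k'') ≠ 0 := by
    intro h; rw [h, zero_mul] at h1; exact one_ne_zero h1.symm
  rw [map_div₀, Complex.conj_I, eq_inv_of_mul_eq_one_right h1, div_neg,
    Complex.div_I]
  ring
end

section
/- Let m > 0 be real and let λ ∈ ℂ with λ ≠ i and λ ≠ −i. Then the following are equivalent: (a) there exists z ∈ ℂ with z ∉ (−∞,−m] ∪ [m,∞) (as a subset of ℂ via ℝ ⊂ ℂ) such that λ·(z+m) = i·k, where k is the unique complex number with Im k > 0 and k² = z² − m²; (b) Re λ < 0. Moreover, if these hold, then z = m·(1−λ²)/(1+λ²), and this is the only z with the stated properties. -/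
private lemma aux_ne (lam : ℂ) (h1 : lam ≠ Complex.I) (h2 : lam ≠ -Complex.I) :
    1 + lam ^ 2 ≠ 0 := by
  intro h
  have hfac : (lam - Complex.I) * (lam + Complex.I) = 0 := by
    linear_combination h - Complex.I_sq
  rcases mul_eq_zero.mp hfac with h' | h'
  · exact h1 (sub_eq_zero.mp h')
  · exact h2 (eq_neg_of_add_eq_zero_left h')

private lemma aux_im (m : ℝ) (lam : ℂ) :
    ((-(2*(m:ℂ)) * Complex.I * lam / (1 + lam ^ 2)).im) =
      (-(2*m) * lam.re * (1 + Complex.normSq lam)) / Complex.normSq (1 + lam ^ 2) := by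
  rw [Complex.div_im]
  simp [Complex.normSq_apply, Complex.mul_re, Complex.mul_im, pow_two, Complex.add_re,
    Complex.add_im, Complex.one_re, Complex.one_im, Complex.ofReal_re, Complex.ofReal_im]
  ring

/-- For `m > 0` and `λ ≠ ±i`: there is a `z` outside `(-∞,-m] ∪ [m,∞)` with
`λ (z+m) = i k(z)` (where `k(z)` is the square root of `z² - m²` with positive
imaginary part) iff `Re λ < 0`; and any such `z` is `m (1-λ²)/(1+λ²)`. -/
theorem stmt16 (m : ℝ) (hm : 0 < m) (lam : ℂ)
    (h1 : lam ≠ Complex.I) (h2 : lam ≠ -Complex.I) :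
    ((∃ z k : ℂ, (¬∃ t : ℝ, (t ≤ -m ∨ m ≤ t) ∧ z = (t : ℂ)) ∧ 0 < k.im ∧
        k ^ 2 = z ^ 2 - (m : ℂ) ^ 2 ∧ lam * (z + (m : ℂ)) = Complex.I * k) ↔
      lam.re < 0) ∧
    (∀ z k : ℂ, (¬∃ t : ℝ, (t ≤ -m ∨ m ≤ t) ∧ z = (t : ℂ)) → 0 < k.im →
      k ^ 2 = z ^ 2 - (m : ℂ) ^ 2 → lam * (z + (m : ℂ)) = Complex.I * k →
      z = (m : ℂ) * (1 - lam ^ 2) / (1 + lam ^ 2)) := by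
  have hd : 1 + lam ^ 2 ≠ 0 := aux_ne lam h1 h2
  have hnsd : 0 < Complex.normSq (1 + lam ^ 2) := Complex.normSq_pos.mpr hd
  have h1' : (0:ℝ) < 1 + Complex.normSq lam := by
    nlinarith [Complex.normSq_nonneg lam]
  have huniq : ∀ z k : ℂ, (¬∃ t : ℝ, (t ≤ -m ∨ m ≤ t) ∧ z = (t : ℂ)) → 0 < k.im →
      k ^ 2 = z ^ 2 - (m : ℂ) ^ 2 → lam * (z + (m : ℂ)) = Complex.I * k →
      z = (m : ℂ) * (1 - lam ^ 2) / (1 + lam ^ 2) := by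
    intro z k hz hk hk2 heq
    have hzm : z + (m:ℂ) ≠ 0 := by
      intro h
      have h0 : Complex.I * k = 0 := by rw [← heq, h, mul_zero]
      have hk0 : k = 0 := by
        rcases mul_eq_zero.mp h0 with h' | h'
        · exact absurd h' Complex.I_ne_zero
        · exact h'
      simp [hk0] at hk
    have hsq : lam ^ 2 * (z + (m:ℂ)) ^ 2 = -(z ^ 2 - (m:ℂ) ^ 2) := by
      linear_combination (lam * (z + (m:ℂ)) + Complex.I * k) * heq - hk2 + k ^ 2 * Complex.I_sq
    have hfac : (z + (m:ℂ)) * (lam ^ 2 * (z + (m:ℂ)) + (z - (m:ℂ))) = 0 := by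
      linear_combination hsq
    have h0 : lam ^ 2 * (z + (m:ℂ)) + (z - (m:ℂ)) = 0 := by
      rcases mul_eq_zero.mp hfac with h | h
      · exact absurd h hzm
      · exact h
    rw [eq_div_iff hd]
    linear_combination h0
  refine ⟨⟨?_, ?_⟩, huniq⟩
  · rintro ⟨z, k, hz, hk, hk2, heq⟩
    have hzval := huniq z k hz hk hk2 heq
    have hkval : k = -(2*(m:ℂ)) * Complex.I * lam / (1 + lam ^ 2) := by
      have hk1 : k = -Complex.I * (lam * (z + (m:ℂ))) := by
        linear_combination Complex.I * heq + k * Complex.I_sq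
      have hzd : z * (1 + lam ^ 2) = (m:ℂ) * (1 - lam ^ 2) := by
        rw [hzval]; field_simp
      rw [eq_div_iff hd]
      linear_combination (1 + lam ^ 2) * hk1 - Complex.I * lam * hzd
    have him := aux_im m lam
    rw [← hkval] at him
    rw [him, lt_div_iff₀ hnsd] at hk
    by_contra hc
    push_neg at hc
    nlinarith [mul_nonneg hc (mul_pos hm h1').le]
  · intro hre
    set z : ℂ := (m:ℂ) * (1 - lam ^ 2) / (1 + lam ^ 2) with hzdef
    set k : ℂ := -(2*(m:ℂ)) * Complex.I * lam / (1 + lam ^ 2) with hkdef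
    have hk2 : k ^ 2 = z ^ 2 - (m:ℂ) ^ 2 := by
      rw [hzdef, hkdef]
      field_simp
      linear_combination (4*(m:ℂ)^2*lam^2) * Complex.I_sq
    have heq : lam * (z + (m:ℂ)) = Complex.I * k := by
      rw [hzdef, hkdef]
      field_simp
      linear_combination (2*(m:ℂ)*lam) * Complex.I_sq
    have hkim : 0 < k.im := by
      rw [hkdef, aux_im m lam, lt_div_iff₀ hnsd]
      nlinarith [mul_pos (mul_pos hm h1') (neg_pos.mpr hre)]
    refine ⟨z, k, ?_, hkim, hk2, heq⟩
    rintro ⟨t, ht, hzt⟩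
    rw [hzt] at hk2
    have htm : m ^ 2 ≤ t ^ 2 := by
      rcases ht with h | h <;> nlinarith
    have him0 := congrArg Complex.im hk2
    have hre0 := congrArg Complex.re hk2
    simp [pow_two, Complex.mul_im, Complex.mul_re, Complex.sub_im, Complex.sub_re,
      Complex.ofReal_re, Complex.ofReal_im] at him0 hre0
    have hprod : k.re * k.im = 0 := by linarith [him0]
    have hkre : k.re = 0 := by
      rcases mul_eq_zero.mp hprod with h | h
      · exact h
      · exact absurd h (ne_of_gt hkim)
    nlinarith [hre0, hkre, hkim, htm]
end

section
/- Let m ∈ ℝ and let a < b be real numbers, and let φ = (φ¹,φ²), ψ = (ψ¹,ψ²) : [a,b] → ℂ² be continuously differentiable. Then ∫_a^b ( ⟨φ(x), (Dψ)(x)⟩ − ⟨(Dφ)(x), ψ(x)⟩ ) dx = ⟨Γ¹φ, Γ²ψ⟩ − ⟨Γ²φ, Γ¹ψ⟩, where (Du)(x) = −i σ₁ u'(x) + m σ₃ u(x), Γ¹u = (u¹(a), u¹(b)) ∈ ℂ², Γ²u = (i u²(a), −i u²(b)) ∈ ℂ², and all inner products are the standard Hermitian inner products (antilinear in the first argument)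 on ℂ². -/
open Set

/-- The abstract Green identity for the Dirac operator on `(a,b)`:
`∫ (⟨φ, Dψ⟩ - ⟨Dφ, ψ⟩) = ⟨Γ¹φ, Γ²ψ⟩ - ⟨Γ²φ, Γ¹ψ⟩`, where
`(Du)(x) = -i σ₁ u'(x) + m σ₃ u(x)`, `Γ¹u = (u¹(a), u¹(b))` and
`Γ²u = (i u²(a), -i u²(b))`, written out componentwise with the standard Hermitian
inner products (antilinear in the first argument). -/
theorem stmt17 (m a b : ℝ) (hab : a < b) (φ₁ φ₂ ψ₁ ψ₂ : ℝ → ℂ)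
    (hφ₁ : ContDiffOn ℝ 1 φ₁ (Icc a b)) (hφ₂ : ContDiffOn ℝ 1 φ₂ (Icc a b))
    (hψ₁ : ContDiffOn ℝ 1 ψ₁ (Icc a b)) (hψ₂ : ContDiffOn ℝ 1 ψ₂ (Icc a b)) :
    (∫ x in a..b,
      ((starRingEnd ℂ (φ₁ x)) *
          ((-Complex.I) * derivWithin ψ₂ (Icc a b) x + (m : ℂ) * ψ₁ x) +
        (starRingEnd ℂ (φ₂ x)) *
          ((-Complex.I) * derivWithin ψ₁ (Icc a b) x - (m : ℂ) * ψ₂ x) -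
        (starRingEnd ℂ ((-Complex.I) * derivWithin φ₂ (Icc a b) x + (m : ℂ) * φ₁ x)) *
          ψ₁ x -
        (starRingEnd ℂ ((-Complex.I) * derivWithin φ₁ (Icc a b) x - (m : ℂ) * φ₂ x)) *
          ψ₂ x)) =
      ((starRingEnd ℂ (φ₁ a)) * (Complex.I * ψ₂ a) +
        (starRingEnd ℂ (φ₁ b)) * (-Complex.I * ψ₂ b)) -
      ((starRingEnd ℂ (Complex.I * φ₂ a)) * ψ₁ a +
        (starRingEnd ℂ (-Complex.I * φ₂ b)) * ψ₁ b) := by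
  have huniq : UniqueDiffOn ℝ (Icc a b) := uniqueDiffOn_Icc hab
  have key : ∀ f : ℝ → ℂ, ContDiffOn ℝ 1 f (Icc a b) → ∀ x ∈ Ioo a b,
      HasDerivAt f (derivWithin f (Icc a b) x) x := by
    intro f hf x hx
    have h := (hf.differentiableOn one_ne_zero x (Ioo_subset_Icc_self hx)).hasDerivWithinAt
    exact h.hasDerivAt (Icc_mem_nhds hx.1 hx.2)
  have cont : ∀ f : ℝ → ℂ, ContDiffOn ℝ 1 f (Icc a b) →
      ContinuousOn (derivWithin f (Icc a b)) (Icc a b) := fun f hf =>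
    hf.continuousOn_derivWithin huniq le_rfl
  set g : ℝ → ℂ := fun x =>
      ((starRingEnd ℂ (φ₁ x)) *
          ((-Complex.I) * derivWithin ψ₂ (Icc a b) x + (m : ℂ) * ψ₁ x) +
        (starRingEnd ℂ (φ₂ x)) *
          ((-Complex.I) * derivWithin ψ₁ (Icc a b) x - (m : ℂ) * ψ₂ x) -
        (starRingEnd ℂ ((-Complex.I) * derivWithin φ₂ (Icc a b) x + (m : ℂ) * φ₁ x)) *
          ψ₁ x -
        (starRingEnd ℂ ((-Complex.I) * derivWithin φ₁ (Icc a b) x - (m : ℂ) * φ₂ x)) *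
          ψ₂ x) with hg
  set F : ℝ → ℂ := fun x =>
    -Complex.I * ((starRingEnd ℂ (φ₁ x)) * ψ₂ x + (starRingEnd ℂ (φ₂ x)) * ψ₁ x) with hF
  have hconjc : Continuous (starRingEnd ℂ) := Complex.continuous_conj
  have hgcont : ContinuousOn g (Icc a b) := by
    apply ContinuousOn.sub
    apply ContinuousOn.sub
    apply ContinuousOn.add
    · exact (hconjc.comp_continuousOn (hφ₁.continuousOn)).mul
        (((cont ψ₂ hψ₂).const_smul (-Complex.I)).add ((hψ₁.continuousOn).const_smul (m:ℂ)))
    · exact (hconjc.comp_continuousOn (hφ₂.continuousOn)).mul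
        (((cont ψ₁ hψ₁).const_smul (-Complex.I)).sub ((hψ₂.continuousOn).const_smul (m:ℂ)))
    · exact (hconjc.comp_continuousOn
        (((cont φ₂ hφ₂).const_smul (-Complex.I)).add ((hφ₁.continuousOn).const_smul (m:ℂ)))).mul
        hψ₁.continuousOn
    · exact (hconjc.comp_continuousOn
        (((cont φ₁ hφ₁).const_smul (-Complex.I)).sub ((hφ₂.continuousOn).const_smul (m:ℂ)))).mul
        hψ₂.continuousOn
  have hFcont : ContinuousOn F (Icc a b) := by
    apply ContinuousOn.const_smul _ (-Complex.I)
    exact ((hconjc.comp_continuousOn hφ₁.continuousOn).mul hψ₂.continuousOn).add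
      ((hconjc.comp_continuousOn hφ₂.continuousOn).mul hψ₁.continuousOn)
  have hint : IntervalIntegrable g MeasureTheory.volume a b := by
    apply ContinuousOn.intervalIntegrable
    rwa [uIcc_of_le hab.le]
  have hderiv : ∀ x ∈ Ioo a b, HasDerivAt F (g x) x := by
    intro x hx
    have h1 := key φ₁ hφ₁ x hx
    have h2 := key φ₂ hφ₂ x hx
    have h3 := key ψ₁ hψ₁ x hx
    have h4 := key ψ₂ hψ₂ x hx
    have hd := (((h1.star.mul h4).add (h2.star.mul h3)).const_mul (-Complex.I))
    convert hd using 1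
    · rfl
    · rfl
    simp only [hg, ← starRingEnd_apply, map_add, map_sub, map_mul, map_neg, Complex.conj_I,
      Complex.conj_ofReal]
    ring
  have hmain : ∫ x in a..b, g x = F b - F a := by
    apply intervalIntegral.integral_eq_sub_of_hasDeriv_right_of_le hab.le hFcont
      (fun x hx => (hderiv x hx).hasDerivWithinAt) hint
  rw [hmain]
  simp only [hF, map_mul, map_neg, Complex.conj_I]
  ring
end
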